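/- arXiv:math/0701279 — 4 statements merged into one kernel-verified Lean document; each statement's English description precedes it below -/
import Mathlib

section
/- Let (Ω, F, P) be a probability space and let (x_n)_{n≥1} be a sequence of independent real-valued random variables with ⟨x_n⟩ = 0 for every n. For each n let f_n : ℝ^ℕ → ℝ be measurable with respect to the product σ-algebra, and define z_n(ω) = x_n(ω) · f_n(x_{n+1}(ω), x_{n+2}(ω), …). Then for all integers N₁ ≤ N₂ and every real r > 0, P({ω : max_{N₁ ≤ n ≤ N₂} |z_n(ω) + z_{n+1}(ω) + … + z_{N₂}(ω)| > r}) ≤ (Σ_{j=N₁}^{N₂} ⟨z_j²⟩) / r². -/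
open MeasureTheory ProbabilityTheory Filter
open scoped ENNReal

set_option maxHeartbeats 1000000

lemma aux_integrable_mul_of_memL2 {Ω : Type*} [MeasurableSpace Ω] {P : Measure Ω}
    {g h : Ω → ℝ} (hg : MemLp g 2 P) (hh : MemLp h 2 P) :
    Integrable (fun ω => g ω * h ω) P := by
  refine Integrable.mono' (((hg.integrable_sq.add hh.integrable_sq)).div_const 2)
    (hg.aestronglyMeasurable.mul hh.aestronglyMeasurable) ?_
  filter_upwards with ω
  simp only [Pi.add_apply]
  rw [Real.norm_eq_abs, abs_mul]
  nlinarith [sq_nonneg (|g ω| - |h ω|), sq_abs (g ω), sq_abs (h ω), abs_nonneg (g ω),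
    abs_nonneg (h ω)]

lemma aux_cross_zero {Ω : Type*} {mΩ : MeasurableSpace Ω} (P : Measure Ω) [IsProbabilityMeasure P]
    (x : ℕ → Ω → ℝ) (hxmeas : ∀ n, Measurable (x n))
    (hindep : iIndepFun x P)
    (hmean : ∀ n, ∫ ω, x n ω ∂P = 0)
    (f : ℕ → (ℕ → ℝ) → ℝ) (hf : ∀ n, Measurable (f n))
    (j : ℕ) (Y : Ω → ℝ)
    (hY : Measurable[⨆ i ∈ {i : ℕ | j < i}, MeasurableSpace.comap (x i) inferInstance] Y) :
    ∫ ω, (x j ω * f j (fun k => x (j + 1 + k) ω)) * Y ω ∂P = 0 := by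
  set mT : MeasurableSpace Ω :=
    ⨆ i ∈ {i : ℕ | j < i}, MeasurableSpace.comap (x i) inferInstance with hmT
  have hxT : ∀ i, j < i → Measurable[mT] (x i) := by
    intro i hi
    exact (comap_measurable (x i)).mono
      (le_biSup (fun i => MeasurableSpace.comap (x i) inferInstance) hi) le_rfl
  have hTle : mT ≤ mΩ := by
    rw [hmT]; exact iSup₂_le fun i _ => (hxmeas i).comap_le
  set G : Ω → ℝ := fun ω => f j (fun k => x (j + 1 + k) ω) * Y ω with hG
  have hGmeas : Measurable[mT] G := by
    refine Measurable.mul ?_ hY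
    exact (hf j).comp (measurable_pi_lambda _ fun k => hxT _ (by omega))
  have hIndep : Indep (MeasurableSpace.comap (x j) inferInstance) mT P := by
    have hd : Disjoint ({j} : Set ℕ) {i : ℕ | j < i} := by
      rw [Set.disjoint_left]
      rintro a ha hb
      simp only [Set.mem_singleton_iff] at ha
      simp only [Set.mem_setOf_eq] at hb
      omega
    have h := indep_iSup_of_disjoint (fun i => (hxmeas i).comap_le) hindep.iIndep hd
    simpa [hmT] using h
  have hIF : IndepFun (x j) G P := by
    rw [IndepFun_iff_Indep]
    refine indep_of_indep_of_le_right hIndep ?_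
    exact Measurable.comap_le hGmeas
  have h := hIF.integral_fun_mul_eq_mul_integral (hxmeas j).aestronglyMeasurable
    (Measurable.aestronglyMeasurable (μ := P) (hGmeas.mono hTle le_rfl))
  rw [hmean j, zero_mul] at h
  rw [← h]
  congr 1
  funext ω
  simp only [hG]
  ring

/-- Kolmogorov-type maximal inequality, Lemma 2.2 of
Breuer–Last: let `x n` be independent mean-zero random variables,
`z n ω = x n ω * f n (x (n+1) ω, x (n+2) ω, …)` with each `f n` measurable for
the product σ-algebra.  Then for `N₁ ≤ N₂` and `r > 0`,
`P(max_{N₁ ≤ n ≤ N₂} |z n + … + z N₂| > r) ≤ (∑_{j=N₁}^{N₂} ⟨z j ^ 2⟩) / r²`. -/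
theorem kolmogorov_type_maximal_inequality
    {Ω : Type*} [MeasurableSpace Ω] (P : Measure Ω) [IsProbabilityMeasure P]
    (x : ℕ → Ω → ℝ) (hxmeas : ∀ n, Measurable (x n))
    (hindep : iIndepFun x P)
    (hmean : ∀ n, ∫ ω, x n ω ∂P = 0)
    (f : ℕ → (ℕ → ℝ) → ℝ) (hf : ∀ n, Measurable (f n))
    (z : ℕ → Ω → ℝ)
    (hz : ∀ n ω, z n ω = x n ω * f n (fun k => x (n + 1 + k) ω))
    (N₁ N₂ : ℕ) (hN : N₁ ≤ N₂) (r : ℝ) (hr : 0 < r) :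
    P {ω | ∃ n, N₁ ≤ n ∧ n ≤ N₂ ∧ r < |∑ j ∈ Finset.Icc n N₂, z j ω|} ≤
      (∑ j ∈ Finset.Icc N₁ N₂, ∫⁻ ω, ENNReal.ofReal ((z j ω) ^ 2) ∂P) /
        ENNReal.ofReal (r ^ 2) := by
  classical
  have hzmeas : ∀ n, Measurable (z n) := by
    intro n
    have he : z n = fun ω => x n ω * f n (fun k => x (n + 1 + k) ω) := funext (hz n)
    rw [he]
    exact (hxmeas n).mul ((hf n).comp (measurable_pi_lambda _ fun k => hxmeas _))
  -- reduce to the case where every z j (N₁ ≤ j ≤ N₂) is in L²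
  by_cases hfin : ∀ j ∈ Finset.Icc N₁ N₂, (∫⁻ ω, ENNReal.ofReal ((z j ω) ^ 2) ∂P) ≠ ⊤
  swap
  · push_neg at hfin
    obtain ⟨j, hj, hjtop⟩ := hfin
    have htop : (∑ j ∈ Finset.Icc N₁ N₂, ∫⁻ ω, ENNReal.ofReal ((z j ω) ^ 2) ∂P) = ⊤ := by
      rw [← top_le_iff, ← hjtop]
      exact Finset.single_le_sum (f := fun j => ∫⁻ ω, ENNReal.ofReal ((z j ω) ^ 2) ∂P)
        (fun i _ => zero_le) hj
    rw [htop, ENNReal.top_div_of_ne_top ENNReal.ofReal_ne_top]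
    exact le_top
  have hL2 : ∀ j ∈ Finset.Icc N₁ N₂, MemLp (z j) 2 P := by
    intro j hj
    rw [memLp_two_iff_integrable_sq (hzmeas j).aestronglyMeasurable]
    refine ⟨((hzmeas j).pow_const 2).aestronglyMeasurable, ?_⟩
    rw [hasFiniteIntegral_iff_ofReal (Eventually.of_forall fun ω => sq_nonneg _)]
    exact lt_top_iff_ne_top.mpr (hfin j hj)
  -- notation
  set S : ℕ → Ω → ℝ := fun n ω => ∑ j ∈ Finset.Icc n N₂, z j ω with hS
  have hSmeas : ∀ n, Measurable (S n) :=
    fun n => Finset.measurable_sum _ fun j _ => hzmeas j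
  have hSL2 : ∀ n, N₁ ≤ n → MemLp (S n) 2 P := by
    intro n hn
    exact memLp_finset_sum _ fun j hj =>
      hL2 j (Finset.mem_Icc.mpr ⟨le_trans hn (Finset.mem_Icc.mp hj).1, (Finset.mem_Icc.mp hj).2⟩)
  -- the disjoint decomposition
  set A : ℕ → Set Ω := fun n =>
    {ω | r < |S n ω| ∧ ∀ m ∈ Finset.Icc (n + 1) N₂, |S m ω| ≤ r} with hA
  have hAmeas : ∀ n, MeasurableSet (A n) := by
    intro n
    have : A n = {ω | r < |S n ω|} ∩ ⋂ m ∈ Finset.Icc (n + 1) N₂, {ω | |S m ω| ≤ r} := by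
      ext ω; simp [hA, Set.mem_iInter]
    rw [this]
    refine (measurableSet_lt measurable_const (hSmeas n).abs).inter ?_
    exact MeasurableSet.biInter (Finset.Icc (n+1) N₂ : Finset ℕ).countable_toSet
      (fun m _ => measurableSet_le (hSmeas m).abs measurable_const)
  have hdisj : (↑(Finset.Icc N₁ N₂) : Set ℕ).PairwiseDisjoint A := by
    have key : ∀ m n, m < n → n ≤ N₂ → Disjoint (A m) (A n) := by
      intro m n hlt hn
      refine Set.disjoint_left.mpr fun ω hωm hωn => ?_
      exact absurd hωn.1 (not_lt.mpr (hωm.2 n (Finset.mem_Icc.mpr ⟨hlt, hn⟩)))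
    intro m hm n hn hmn
    rcases lt_or_gt_of_ne hmn with h | h
    · exact key m n h (Finset.mem_Icc.mp (Finset.mem_coe.mp hn)).2
    · exact (key n m h (Finset.mem_Icc.mp (Finset.mem_coe.mp hm)).2).symm
  have hunion : {ω | ∃ n, N₁ ≤ n ∧ n ≤ N₂ ∧ r < |S n ω|} = ⋃ n ∈ Finset.Icc N₁ N₂, A n := by
    ext ω
    simp only [Set.mem_setOf_eq, Set.mem_iUnion, Finset.mem_Icc, exists_prop]
    constructor
    · rintro ⟨n, hn1, hn2, hn3⟩
      set F := (Finset.Icc N₁ N₂).filter (fun m => r < |S m ω|) with hF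
      have hne : F.Nonempty := ⟨n, Finset.mem_filter.mpr ⟨Finset.mem_Icc.mpr ⟨hn1, hn2⟩, hn3⟩⟩
      set n₀ := F.max' hne with hn₀
      have hn₀F : n₀ ∈ F := F.max'_mem hne
      obtain ⟨hn₀Icc, hn₀r⟩ := Finset.mem_filter.mp hn₀F
      refine ⟨n₀, Finset.mem_Icc.mp hn₀Icc, hn₀r, ?_⟩
      intro m hm
      by_contra hcon
      push_neg at hcon
      have hm1 := (Finset.mem_Icc.mp hm).1
      have hm2 := (Finset.mem_Icc.mp hm).2
      have hn₀1 := (Finset.mem_Icc.mp hn₀Icc).1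
      have hmF : m ∈ F := Finset.mem_filter.mpr ⟨Finset.mem_Icc.mpr ⟨by omega, hm2⟩, hcon⟩
      have hle := F.le_max' m hmF
      omega
    · rintro ⟨n, hn, hωn⟩
      exact ⟨n, hn.1, hn.2, hωn.1⟩
  -- measurability with respect to tail σ-algebras
  set mT : ℕ → MeasurableSpace Ω :=
    fun j => ⨆ i ∈ {i : ℕ | j < i}, MeasurableSpace.comap (x i) inferInstance with hmTdef
  have hxT : ∀ j i, j < i → Measurable[mT j] (x i) := by
    intro j i hi
    exact (comap_measurable (x i)).mono
      (le_biSup (fun i => MeasurableSpace.comap (x i) inferInstance) hi) le_rfl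
  have hzT : ∀ j i, j < i → Measurable[mT j] (z i) := by
    intro j i hi
    letI : MeasurableSpace Ω := mT j
    have he : z i = fun ω => x i ω * f i (fun k => x (i + 1 + k) ω) := funext (hz i)
    rw [he]
    exact (hxT j i hi).mul
      ((hf i).comp (measurable_pi_lambda _ fun k => hxT j _ (by omega)))
  have hST : ∀ j n, j < n → Measurable[mT j] (S n) := by
    intro j n hn
    letI : MeasurableSpace Ω := mT j
    have he : S n = fun ω => ∑ i ∈ Finset.Icc n N₂, z i ω := rfl
    rw [he]
    exact Finset.measurable_sum _ fun i hi =>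
      hzT j i (lt_of_lt_of_le hn (Finset.mem_Icc.mp hi).1)
  have hAT : ∀ j n, j < n → MeasurableSet[mT j] (A n) := by
    intro j n hn
    letI : MeasurableSpace Ω := mT j
    have he : A n = {ω | r < |S n ω|} ∩ ⋂ m ∈ Finset.Icc (n + 1) N₂, {ω | |S m ω| ≤ r} := by
      ext ω; simp [hA, Set.mem_iInter]
    rw [he]
    refine MeasurableSet.inter ?_ ?_
    · exact measurableSet_lt measurable_const (hST j n hn).abs
    · refine MeasurableSet.biInter (Finset.Icc (n+1) N₂ : Finset ℕ).countable_toSet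
        (fun m hm => measurableSet_le ((hST j m ?_).abs) measurable_const)
      have h3 : m ∈ Finset.Icc (n + 1) N₂ := hm
      have h2 := Finset.mem_Icc.mp h3
      omega
  -- the key per-piece estimate
  have step : ∀ n ∈ Finset.Icc N₁ N₂,
      r ^ 2 * (P (A n)).toReal ≤ ∫ ω in A n, (S N₁ ω) ^ 2 ∂P := by
    intro n hn
    obtain ⟨hn1, hn2⟩ := Finset.mem_Icc.mp hn
    have hSnL2 := hSL2 n hn1
    have hSN₁L2 := hSL2 N₁ le_rfl
    have hIntSn2 : IntegrableOn (fun ω => S n ω ^ 2) (A n) P :=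
      (hSnL2.integrable_sq).integrableOn
    have stepA : r ^ 2 * (P (A n)).toReal ≤ ∫ ω in A n, (S n ω) ^ 2 ∂P := by
      have h0 : ∫ _ω in A n, r ^ 2 ∂P = (P (A n)).toReal * r ^ 2 := by
        rw [setIntegral_const]; simp [smul_eq_mul, Measure.real]
      rw [mul_comm, ← h0]
      refine setIntegral_mono_on
        (integrableOn_const (measure_ne_top P _)) hIntSn2 (hAmeas n) ?_
      intro ω hω
      have h1 : r ≤ |S n ω| := le_of_lt hω.1
      nlinarith [sq_abs (S n ω), abs_nonneg (S n ω)]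
    -- decomposition
    set D : Ω → ℝ := fun ω => ∑ j ∈ Finset.Ico N₁ n, z j ω with hD
    have hDL2 : MemLp D 2 P := by
      refine memLp_finset_sum _ fun j hj => hL2 j ?_
      have := Finset.mem_Ico.mp hj
      exact Finset.mem_Icc.mpr ⟨this.1, by omega⟩
    have hdecomp : ∀ ω, S N₁ ω = D ω + S n ω := by
      intro ω
      have hsplit : Finset.Icc N₁ N₂ = Finset.Ico N₁ n ∪ Finset.Icc n N₂ := by
        ext a
        simp only [Finset.mem_Icc, Finset.mem_Ico, Finset.mem_union]
        omega
      have hd2 : Disjoint (Finset.Ico N₁ n) (Finset.Icc n N₂) := by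
        rw [Finset.disjoint_left]
        intro a ha hb
        have h1 := Finset.mem_Ico.mp ha
        have h2 := Finset.mem_Icc.mp hb
        omega
      show (∑ j ∈ Finset.Icc N₁ N₂, z j ω) = _
      rw [hsplit, Finset.sum_union hd2]
    have hcross : ∀ j ∈ Finset.Ico N₁ n,
        ∫ ω, z j ω * ((A n).indicator (S n) ω) ∂P = 0 := by
      intro j hj
      have hjn : j < n := (Finset.mem_Ico.mp hj).2
      have hYmeas : Measurable[mT j] ((A n).indicator (S n)) :=
        Measurable.indicator (hST j n hjn) (hAT j n hjn)
      have h := aux_cross_zero P x hxmeas hindep hmean f hf j ((A n).indicator (S n)) hYmeas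
      rw [← h]
      refine integral_congr_ae (Filter.Eventually.of_forall fun ω => ?_)
      simp only [hz]
    have hcrossInt : ∫ ω in A n, (D ω * S n ω) ∂P = 0 := by
      rw [← integral_indicator (hAmeas n)]
      have heq : ∀ ω, (A n).indicator (fun ω => D ω * S n ω) ω
          = ∑ j ∈ Finset.Ico N₁ n, z j ω * (A n).indicator (S n) ω := by
        intro ω
        by_cases hω : ω ∈ A n
        · simp only [Set.indicator_of_mem hω, hD, Finset.sum_mul]
        · simp [Set.indicator_of_notMem hω]
      rw [integral_congr_ae (Filter.Eventually.of_forall heq),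
        integral_finset_sum _ (fun j hj => aux_integrable_mul_of_memL2
          (hL2 j (by
            have := Finset.mem_Ico.mp hj
            exact Finset.mem_Icc.mpr ⟨this.1, by omega⟩))
          (MemLp.indicator (hAmeas n) hSnL2))]
      exact Finset.sum_eq_zero hcross
    have hIntSN2 : IntegrableOn (fun ω => S N₁ ω ^ 2) (A n) P :=
      (hSN₁L2.integrable_sq).integrableOn
    have hIntD2 : IntegrableOn (fun ω => D ω ^ 2) (A n) P :=
      (hDL2.integrable_sq).integrableOn
    have hIntDS : IntegrableOn (fun ω => D ω * S n ω) (A n) P :=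
      (aux_integrable_mul_of_memL2 hDL2 hSnL2).integrableOn
    have stepB : ∫ ω in A n, (S n ω) ^ 2 ∂P ≤ ∫ ω in A n, (S N₁ ω) ^ 2 ∂P := by
      have hD2nonneg : 0 ≤ ∫ ω in A n, D ω ^ 2 ∂P :=
        setIntegral_nonneg (hAmeas n) fun ω _ => sq_nonneg _
      have hDS2 : IntegrableOn (fun ω => D ω ^ 2 + 2 * (D ω * S n ω)) (A n) P :=
        hIntD2.add (hIntDS.const_mul 2)
      have hadd1 : ∫ ω in A n, (D ω ^ 2 + 2 * (D ω * S n ω)) ∂P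
          = (∫ ω in A n, D ω ^ 2 ∂P) + ∫ ω in A n, 2 * (D ω * S n ω) ∂P :=
        integral_add hIntD2 (hIntDS.const_mul 2)
      have hadd2 : ∫ ω in A n, (S n ω ^ 2 + (D ω ^ 2 + 2 * (D ω * S n ω))) ∂P
          = (∫ ω in A n, S n ω ^ 2 ∂P)
            + ∫ ω in A n, (D ω ^ 2 + 2 * (D ω * S n ω)) ∂P :=
        integral_add hIntSn2 hDS2
      have hmul : ∫ ω in A n, 2 * (D ω * S n ω) ∂P
          = 2 * ∫ ω in A n, (D ω * S n ω) ∂P := integral_const_mul 2 _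
      have hcongr : ∫ ω in A n, (S N₁ ω) ^ 2 ∂P
          = ∫ ω in A n, (S n ω ^ 2 + (D ω ^ 2 + 2 * (D ω * S n ω))) ∂P := by
        refine integral_congr_ae (Filter.Eventually.of_forall fun ω => ?_)
        simp only [hdecomp ω]
        ring
      rw [hcongr, hadd2, hadd1, hmul, hcrossInt]
      linarith
    linarith
  -- orthogonality of the increments
  have horth : ∫ ω, (S N₁ ω) ^ 2 ∂P = ∑ j ∈ Finset.Icc N₁ N₂, ∫ ω, (z j ω) ^ 2 ∂P := by
    have hexp : ∀ ω, (S N₁ ω) ^ 2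
        = ∑ i ∈ Finset.Icc N₁ N₂, ∑ j ∈ Finset.Icc N₁ N₂, z i ω * z j ω := by
      intro ω
      show (∑ j ∈ Finset.Icc N₁ N₂, z j ω) ^ 2 = _
      rw [sq, Finset.sum_mul_sum]
    rw [integral_congr_ae (Filter.Eventually.of_forall hexp),
      integral_finset_sum _ (fun i hi => integrable_finset_sum _ fun j hj =>
        aux_integrable_mul_of_memL2 (hL2 i hi) (hL2 j hj))]
    refine Finset.sum_congr rfl fun i hi => ?_
    rw [integral_finset_sum _ (fun j hj => aux_integrable_mul_of_memL2 (hL2 i hi) (hL2 j hj))]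
    rw [Finset.sum_eq_single i]
    · refine integral_congr_ae (Filter.Eventually.of_forall fun ω => ?_)
      simp only [sq]
    · intro j hj hji
      rcases lt_or_gt_of_ne hji with hlt | hgt
      · -- j < i : ∫ z i * z j = ∫ z j * z i = 0
        have h := aux_cross_zero P x hxmeas hindep hmean f hf j (z i) (hzT j i hlt)
        rw [← h]
        refine integral_congr_ae (Filter.Eventually.of_forall fun ω => ?_)
        simp only [hz]; ring
      · -- i < j
        have h := aux_cross_zero P x hxmeas hindep hmean f hf i (z j) (hzT i j hgt)
        rw [← h]
        refine integral_congr_ae (Filter.Eventually.of_forall fun ω => ?_)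
        simp only [hz]
    · intro hii
      exact absurd hi hii
  -- sum of the pieces is at most the whole integral
  have hSN₁sq_int : Integrable (fun ω => (S N₁ ω) ^ 2) P := (hSL2 N₁ le_rfl).integrable_sq
  have hsum_le : ∑ n ∈ Finset.Icc N₁ N₂, ∫ ω in A n, (S N₁ ω) ^ 2 ∂P
      ≤ ∫ ω, (S N₁ ω) ^ 2 ∂P := by
    rw [← integral_biUnion_finset (Finset.Icc N₁ N₂) (fun n _ => hAmeas n) hdisj
      (fun n _ => hSN₁sq_int.integrableOn)]
    exact setIntegral_le_integral hSN₁sq_int (Filter.Eventually.of_forall fun ω => sq_nonneg _)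
  have hmeas_sum : P {ω | ∃ n, N₁ ≤ n ∧ n ≤ N₂ ∧ r < |S n ω|}
      = ∑ n ∈ Finset.Icc N₁ N₂, P (A n) := by
    rw [hunion, measure_biUnion_finset hdisj (fun n _ => hAmeas n)]
  -- put everything together, real version
  have hfinal : r ^ 2 * (P {ω | ∃ n, N₁ ≤ n ∧ n ≤ N₂ ∧ r < |S n ω|}).toReal
      ≤ ∑ j ∈ Finset.Icc N₁ N₂, ∫ ω, (z j ω) ^ 2 ∂P := by
    rw [hmeas_sum, ENNReal.toReal_sum (fun n _ => measure_ne_top P _), Finset.mul_sum]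
    calc ∑ n ∈ Finset.Icc N₁ N₂, r ^ 2 * (P (A n)).toReal
        ≤ ∑ n ∈ Finset.Icc N₁ N₂, ∫ ω in A n, (S N₁ ω) ^ 2 ∂P := Finset.sum_le_sum step
      _ ≤ ∫ ω, (S N₁ ω) ^ 2 ∂P := hsum_le
      _ = ∑ j ∈ Finset.Icc N₁ N₂, ∫ ω, (z j ω) ^ 2 ∂P := horth
  -- convert to the ENNReal statement
  have hgoal_set : {ω | ∃ n, N₁ ≤ n ∧ n ≤ N₂ ∧ r < |∑ j ∈ Finset.Icc n N₂, z j ω|}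
      = {ω | ∃ n, N₁ ≤ n ∧ n ≤ N₂ ∧ r < |S n ω|} := rfl
  rw [hgoal_set]
  have hRHS : (∑ j ∈ Finset.Icc N₁ N₂, ∫⁻ ω, ENNReal.ofReal ((z j ω) ^ 2) ∂P)
      = ENNReal.ofReal (∑ j ∈ Finset.Icc N₁ N₂, ∫ ω, (z j ω) ^ 2 ∂P) := by
    rw [ENNReal.ofReal_sum_of_nonneg (fun j _ => integral_nonneg fun ω => sq_nonneg _)]
    refine Finset.sum_congr rfl fun j hj => ?_
    rw [← ofReal_integral_eq_lintegral_ofReal (hL2 j hj).integrable_sq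
      (Filter.Eventually.of_forall fun ω => sq_nonneg _)]
  rw [hRHS]
  have hr2 : (0 : ℝ) < r ^ 2 := by positivity
  rw [ENNReal.le_div_iff_mul_le (Or.inl (ENNReal.ofReal_pos.mpr hr2).ne')
    (Or.inl ENNReal.ofReal_ne_top)]
  set E := {ω | ∃ n, N₁ ≤ n ∧ n ≤ N₂ ∧ r < |S n ω|} with hE
  calc P E * ENNReal.ofReal (r ^ 2)
      = ENNReal.ofReal ((P E).toReal) * ENNReal.ofReal (r ^ 2) := by
        rw [ENNReal.ofReal_toReal (measure_ne_top P _)]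
    _ = ENNReal.ofReal ((P E).toReal * r ^ 2) := (ENNReal.ofReal_mul ENNReal.toReal_nonneg).symm
    _ ≤ ENNReal.ofReal (∑ j ∈ Finset.Icc N₁ N₂, ∫ ω, (z j ω) ^ 2 ∂P) := by
        refine ENNReal.ofReal_le_ofReal ?_
        calc (P E).toReal * r ^ 2 = r ^ 2 * (P E).toReal := by ring
          _ ≤ _ := hfinal
end

section
/- Let b : {1,2,…} → ℝ and let (b̃_ω(n))_{n≥1} be independent real-valued random variables on a probability space (Ω, F, P) with ⟨b̃(n)⟩ = 0 for every n and Σ_{n=1}^∞ ⟨b̃(n)²⟩ < ∞. Fix E ∈ ℝ such that the transfer matrices for the discrete Schrödinger operator with potential b are bounded: sup_n ‖T₀^E(n)‖ < ∞, where T₀^E(n) are the n-step transfer matrices for (a ≡ 1, b). Then for P-almost every ω the transfer matrices T_ω^E(n) for (a ≡ 1, b + b̃_ω) are also bounded: sup_n ‖T_ω^E(n)‖ < ∞. -/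
open MeasureTheory ProbabilityTheory Filter
open scoped ENNReal Topology NNReal

/-- The single-step transfer matrix `S^E(n) = [[E - b n, -1], [1, 0]]` for the
discrete Schrödinger operator with potential `b`. -/
noncomputable def schrodingerStep (b : ℕ → ℝ) (E : ℝ) (n : ℕ) :
    Matrix (Fin 2) (Fin 2) ℝ :=
  !![E - b n, -1; 1, 0]

/-- The `n`-step transfer matrix `T^E(n) = S^E(n) ⬝ ⋯ ⬝ S^E(1)`. -/
noncomputable def schrodingerTransfer (b : ℕ → ℝ) (E : ℝ) :
    ℕ → Matrix (Fin 2) (Fin 2) ℝ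
  | 0 => 1
  | n + 1 => schrodingerStep b E (n + 1) * schrodingerTransfer b E n

/-- The operator norm (induced by the Euclidean norm on `ℝ²`) of a `2 × 2`
real matrix. -/
noncomputable def opNorm (A : Matrix (Fin 2) (Fin 2) ℝ) : ℝ :=
  ‖LinearMap.toContinuousLinearMap (Matrix.toEuclideanLin A)‖

/-! ### Auxiliary elementary matrix lemmas -/

/-- Squared Frobenius norm of a 2×2 real matrix. -/
def frobSq (A : Matrix (Fin 2) (Fin 2) ℝ) : ℝ :=
  A 0 0 ^ 2 + A 0 1 ^ 2 + A 1 0 ^ 2 + A 1 1 ^ 2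

/-- Frobenius inner product of two 2×2 real matrices. -/
def frobInner (A B : Matrix (Fin 2) (Fin 2) ℝ) : ℝ :=
  A 0 0 * B 0 0 + A 0 1 * B 0 1 + A 1 0 * B 1 0 + A 1 1 * B 1 1

lemma frobSq_nonneg (A : Matrix (Fin 2) (Fin 2) ℝ) : 0 ≤ frobSq A := by
  unfold frobSq; positivity

lemma frobSq_mul_le (A B : Matrix (Fin 2) (Fin 2) ℝ) :
    frobSq (A * B) ≤ frobSq A * frobSq B := by
  simp only [frobSq, Matrix.mul_apply, Fin.sum_univ_two]
  nlinarith [sq_nonneg (A 0 0 * B 1 0 - A 0 1 * B 0 0), sq_nonneg (A 0 0 * B 1 1 - A 0 1 * B 0 1),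
    sq_nonneg (A 1 0 * B 1 0 - A 1 1 * B 0 0), sq_nonneg (A 1 0 * B 1 1 - A 1 1 * B 0 1),
    sq_nonneg (A 0 0 * B 0 0), sq_nonneg (A 0 0 * B 0 1), sq_nonneg (A 0 1 * B 1 0),
    sq_nonneg (A 0 1 * B 1 1), sq_nonneg (A 1 0 * B 0 0), sq_nonneg (A 1 0 * B 0 1),
    sq_nonneg (A 1 1 * B 1 0), sq_nonneg (A 1 1 * B 1 1)]

lemma norm_toEuclideanLin_sq (A : Matrix (Fin 2) (Fin 2) ℝ) (x : EuclideanSpace ℝ (Fin 2)) :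
    ‖Matrix.toEuclideanLin A x‖ ^ 2
      = (A 0 0 * x 0 + A 0 1 * x 1) ^ 2 + (A 1 0 * x 0 + A 1 1 * x 1) ^ 2 := by
  rw [EuclideanSpace.norm_eq]
  rw [Real.sq_sqrt (by positivity)]
  simp [Fin.sum_univ_two, Matrix.toEuclideanLin_apply, Matrix.mulVec, dotProduct,
    sq_abs]

lemma norm_eucl_sq (x : EuclideanSpace ℝ (Fin 2)) : ‖x‖ ^ 2 = x 0 ^ 2 + x 1 ^ 2 := by
  rw [EuclideanSpace.norm_eq, Real.sq_sqrt (by positivity)]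
  simp [Fin.sum_univ_two, sq_abs]

lemma opNorm_nonneg (A : Matrix (Fin 2) (Fin 2) ℝ) : 0 ≤ opNorm A := norm_nonneg _

lemma opNorm_le_sqrt_frobSq (A : Matrix (Fin 2) (Fin 2) ℝ) :
    opNorm A ≤ Real.sqrt (frobSq A) := by
  refine ContinuousLinearMap.opNorm_le_bound _ (Real.sqrt_nonneg _) (fun x => ?_)
  rw [LinearMap.coe_toContinuousLinearMap']
  have h1 : ‖Matrix.toEuclideanLin A x‖ ^ 2 ≤ frobSq A * ‖x‖ ^ 2 := by
    rw [norm_toEuclideanLin_sq, norm_eucl_sq]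
    simp only [frobSq]
    nlinarith [sq_nonneg (A 0 0 * x 1 - A 0 1 * x 0), sq_nonneg (A 1 0 * x 1 - A 1 1 * x 0),
      sq_nonneg (x 0), sq_nonneg (x 1), sq_nonneg (A 0 0), sq_nonneg (A 1 1)]
  have h2 : ‖Matrix.toEuclideanLin A x‖ ≤ Real.sqrt (frobSq A * ‖x‖ ^ 2) := by
    rw [← Real.sqrt_sq (norm_nonneg (Matrix.toEuclideanLin A x))]
    exact Real.sqrt_le_sqrt h1
  calc ‖Matrix.toEuclideanLin A x‖ ≤ Real.sqrt (frobSq A * ‖x‖ ^ 2) := h2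
    _ = Real.sqrt (frobSq A) * ‖x‖ := by
        rw [Real.sqrt_mul (frobSq_nonneg A), Real.sqrt_sq (norm_nonneg x)]

lemma col_sq_le (A : Matrix (Fin 2) (Fin 2) ℝ) (j : Fin 2) :
    A 0 j ^ 2 + A 1 j ^ 2 ≤ opNorm A ^ 2 := by
  classical
  set x : EuclideanSpace ℝ (Fin 2) :=
    (WithLp.equiv 2 (Fin 2 → ℝ)).symm (fun k => if k = j then 1 else 0)
  have hx : ‖x‖ ^ 2 = 1 := by
    rw [norm_eucl_sq]
    fin_cases j <;> simp [x]
  have happ : Matrix.toEuclideanLin A x 0 = A 0 j ∧ Matrix.toEuclideanLin A x 1 = A 1 j := by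
    constructor <;> (fin_cases j <;>
      simp [x, Matrix.toEuclideanLin_apply, Matrix.mulVec, dotProduct, Fin.sum_univ_two])
  have hb : ‖Matrix.toEuclideanLin A x‖ ≤ opNorm A * ‖x‖ := by
    have := (LinearMap.toContinuousLinearMap (Matrix.toEuclideanLin A)).le_opNorm x
    simpa [opNorm] using this
  have hb2 : ‖Matrix.toEuclideanLin A x‖ ^ 2 ≤ opNorm A ^ 2 * ‖x‖ ^ 2 := by
    rw [← mul_pow]
    exact pow_le_pow_left₀ (norm_nonneg _) hb 2
  rw [hx, mul_one] at hb2
  calc A 0 j ^ 2 + A 1 j ^ 2 = ‖Matrix.toEuclideanLin A x‖ ^ 2 := by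
        rw [norm_eucl_sq, happ.1, happ.2]
    _ ≤ opNorm A ^ 2 := hb2

lemma frobSq_le_opNorm (A : Matrix (Fin 2) (Fin 2) ℝ) : frobSq A ≤ 4 * opNorm A ^ 2 := by
  have h0 := col_sq_le A 0
  have h1 := col_sq_le A 1
  have := sq_nonneg (opNorm A)
  unfold frobSq; nlinarith

lemma frobSq_adjugate (A : Matrix (Fin 2) (Fin 2) ℝ) : frobSq A.adjugate = frobSq A := by
  rw [Matrix.adjugate_fin_two]
  simp [frobSq]
  ring

/-! ### Transfer matrix algebra -/

/-- The perturbation direction matrix. -/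
def pertMat : Matrix (Fin 2) (Fin 2) ℝ := !![-1, 0; 0, 0]

lemma frobSq_pertMat : frobSq pertMat = 1 := by
  simp [frobSq, pertMat]

lemma det_schrodingerTransfer (b : ℕ → ℝ) (E : ℝ) (n : ℕ) :
    (schrodingerTransfer b E n).det = 1 := by
  induction n with
  | zero => simp [schrodingerTransfer]
  | succ n ih =>
      rw [schrodingerTransfer, Matrix.det_mul, ih, mul_one, schrodingerStep,
        Matrix.det_fin_two_of]
      ring

lemma step_pert' (b tb : ℕ → ℝ) (E : ℝ) (n : ℕ) :
    schrodingerStep (fun m => b m + tb m) E n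
      = schrodingerStep b E n + tb n • pertMat := by
  unfold schrodingerStep pertMat
  ext i j
  fin_cases i <;> fin_cases j <;> (simp; try ring)

/-- Multiplicative perturbation process: `W(n+1) = (1 + t(n+1) B(n)) W(n)`. -/
noncomputable def pertW {Ω : Type*} (t : ℕ → Ω → ℝ) (B : ℕ → Matrix (Fin 2) (Fin 2) ℝ) :
    ℕ → Ω → Matrix (Fin 2) (Fin 2) ℝ
  | 0 => fun _ => 1
  | n + 1 => fun ω => pertW t B n ω + t (n + 1) ω • (B n * pertW t B n ω)

lemma transfer_factor {Ω : Type*} (b : ℕ → ℝ) (E : ℝ) (tb : ℕ → Ω → ℝ) (ω : Ω) (n : ℕ) :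
    schrodingerTransfer (fun m => b m + tb m ω) E n
      = schrodingerTransfer b E n *
        pertW tb (fun k => (schrodingerTransfer b E (k + 1)).adjugate *
          (pertMat * schrodingerTransfer b E k)) n ω := by
  set T := schrodingerTransfer b E
  have hTTi : ∀ k, T k * (T k).adjugate = 1 := by
    intro k
    rw [Matrix.mul_adjugate, det_schrodingerTransfer, one_smul]
  induction n with
  | zero => simp [schrodingerTransfer, pertW, T]
  | succ n ih =>
      show schrodingerStep (fun m => b m + tb m ω) E (n+1) *
          schrodingerTransfer (fun m => b m + tb m ω) E n = _
      rw [step_pert' b (fun m => tb m ω) E (n+1), ih]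
      show _ = T (n+1) * (pertW tb _ n ω +
        tb (n+1) ω • ((T (n+1)).adjugate * (pertMat * T n) * pertW tb _ n ω))
      rw [mul_add, Matrix.mul_smul, add_mul, Matrix.smul_mul]
      congr 1
      · show schrodingerStep b E (n+1) * (T n * pertW tb _ n ω) = T (n+1) * pertW tb _ n ω
        rw [← mul_assoc]
        rfl
      · congr 1
        rw [← mul_assoc (T (n+1)), ← mul_assoc (T (n+1)), hTTi (n+1), one_mul, mul_assoc]

lemma frobSq_expand (W B : Matrix (Fin 2) (Fin 2) ℝ) (t : ℝ) :
    frobSq (W + t • (B * W))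
      = frobSq W + t * (2 * frobInner W (B * W)) + t ^ 2 * frobSq (B * W) := by
  simp only [frobSq, frobInner, Matrix.add_apply, Matrix.smul_apply, smul_eq_mul]
  ring

/-! ### Integrability helper -/

lemma integrable_mul_of_memLp_two {Ω : Type*} [MeasurableSpace Ω] {P : Measure Ω}
    {f g : Ω → ℝ} (hf : MemLp f 2 P) (hg : MemLp g 2 P) :
    Integrable (fun ω => f ω * g ω) P := by
  refine Integrable.mono' (hf.integrable_sq.add hg.integrable_sq)
    (hf.aestronglyMeasurable.mul hg.aestronglyMeasurable) ?_
  filter_upwards with ω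
  simp only [Pi.add_apply]
  rw [Real.norm_eq_abs, abs_mul]
  nlinarith [sq_nonneg (|f ω| - |g ω|), sq_abs (f ω), sq_abs (g ω),
    abs_nonneg (f ω), abs_nonneg (g ω)]

/-- discrete Schrödinger case of Theorem 1.1 / Corollary 1.2
of Breuer–Last: if the transfer matrices at energy `E` for the potential `b`
are bounded and `b̃ n` are independent mean-zero random variables with
`∑ ⟨b̃ n ^ 2⟩ < ∞`, then almost surely the transfer matrices for the perturbed
potential `b + b̃_ω` are also bounded. -/
theorem bounded_transfer_stable_random_perturbation
    {Ω : Type*} [MeasurableSpace Ω] (P : Measure Ω) [IsProbabilityMeasure P]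
    (b : ℕ → ℝ) (E : ℝ)
    (tb : ℕ → Ω → ℝ) (htbmeas : ∀ n, Measurable (tb n))
    (hindep : iIndepFun tb P)
    (hmean : ∀ n, ∫ ω, tb n ω ∂P = 0)
    (hsum : ∑' n, ∫⁻ ω, ENNReal.ofReal ((tb n ω) ^ 2) ∂P < ⊤)
    (hbdd : ∃ M : ℝ, ∀ n, opNorm (schrodingerTransfer b E n) ≤ M) :
    ∀ᵐ ω ∂P, ∃ M : ℝ, ∀ n,
      opNorm (schrodingerTransfer (fun m => b m + tb m ω) E n) ≤ M := by
  classical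
  obtain ⟨M₀, hM₀⟩ := hbdd
  set T : ℕ → Matrix (Fin 2) (Fin 2) ℝ := schrodingerTransfer b E with hT
  set C : ℝ := |M₀| + 1 with hCdef
  have hC1 : (1:ℝ) ≤ C := by rw [hCdef]; linarith [abs_nonneg M₀]
  have hC : ∀ n, opNorm (T n) ≤ C := fun n =>
    (hM₀ n).trans (by rw [hCdef]; linarith [le_abs_self M₀])
  have hfrobT : ∀ n, frobSq (T n) ≤ 4 * C ^ 2 := by
    intro n
    refine (frobSq_le_opNorm (T n)).trans ?_
    have h := hC n
    have h0 := opNorm_nonneg (T n)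
    nlinarith
  set K : ℝ := 16 * C ^ 4 with hKdef
  have hK0 : 0 ≤ K := by positivity
  set Bm : ℕ → Matrix (Fin 2) (Fin 2) ℝ :=
    fun k => (T (k + 1)).adjugate * (pertMat * T k) with hBmdef
  have hBmK : ∀ k, frobSq (Bm k) ≤ K := by
    intro k
    have h1 := frobSq_mul_le ((T (k + 1)).adjugate) (pertMat * T k)
    have h2 := frobSq_mul_le pertMat (T k)
    have h3 := frobSq_adjugate (T (k + 1))
    have h4 := hfrobT (k + 1)
    have h5 := hfrobT k
    have h6 := frobSq_nonneg ((T (k+1)).adjugate)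
    have h7 := frobSq_nonneg (pertMat * T k)
    have h8 := frobSq_nonneg (T k)
    rw [frobSq_pertMat] at h2
    have hC0 : (0:ℝ) ≤ C := le_trans zero_le_one hC1
    simp only [hBmdef, hKdef]
    nlinarith
  -- the random process
  set W : ℕ → Ω → Matrix (Fin 2) (Fin 2) ℝ := pertW tb Bm with hWdef
  set f : ℕ → Ω → ℝ := fun n ω => frobSq (W n ω) with hfdef
  set g : ℕ → Ω → ℝ := fun n ω => 2 * frobInner (W n ω) (Bm n * W n ω) with hgdef
  set h : ℕ → Ω → ℝ := fun n ω => frobSq (Bm n * W n ω) with hhdef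
  have hfrec : ∀ n ω, f (n + 1) ω = f n ω + g n ω * tb (n + 1) ω + h n ω * tb (n + 1) ω ^ 2 := by
    intro n ω
    have : W (n + 1) ω = W n ω + tb (n + 1) ω • (Bm n * W n ω) := rfl
    simp only [hfdef, hgdef, hhdef, this, frobSq_expand]
    ring
  have hW0 : ∀ ω, W 0 ω = 1 := fun ω => rfl
  -- σ-algebras
  have hSM : ∀ i, StronglyMeasurable (tb i) := fun i => (htbmeas i).stronglyMeasurable
  set ℱ : Filtration ℕ (by infer_instance : MeasurableSpace Ω) :=
    Filtration.natural tb hSM with hFdef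
  have htbF : ∀ n, Measurable[ℱ n] (tb n) := fun n =>
    (Filtration.stronglyAdapted_natural hSM n).measurable
  have hIndepF : ∀ n, Indep (MeasurableSpace.comap (tb (n + 1)) inferInstance) (ℱ n) P :=
    fun n => hindep.indep_comap_natural_of_lt hSM (Nat.lt_succ_self n)
  have hIndepFun : ∀ n (Y : Ω → ℝ), Measurable[ℱ n] Y → IndepFun (tb (n + 1)) Y P := by
    intro n Y hY
    rw [IndepFun_iff_Indep]
    exact indep_of_indep_of_le_right (hIndepF n) hY.comap_le
  -- measurability of entries
  have hWmeas : ∀ n i j, Measurable[ℱ n] (fun ω => W n ω i j) := by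
    intro n
    induction n with
    | zero => intro i j; simpa [hW0] using @measurable_const ℝ Ω _ (ℱ 0) _
    | succ n ihn =>
        intro i j
        have hrec : (fun ω => W (n + 1) ω i j)
            = fun ω => W n ω i j + tb (n + 1) ω *
              (Bm n i 0 * W n ω 0 j + Bm n i 1 * W n ω 1 j) := by
          funext ω
          have : W (n + 1) ω = W n ω + tb (n + 1) ω • (Bm n * W n ω) := rfl
          rw [this]
          simp [Matrix.add_apply, Matrix.smul_apply, Matrix.mul_apply, Fin.sum_univ_two,
            smul_eq_mul]
        rw [hrec]
        have hle : ℱ n ≤ ℱ (n + 1) := ℱ.mono (Nat.le_succ n)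
        have h1 : Measurable[ℱ (n+1)] (fun ω => W n ω i j) := (ihn i j).mono hle le_rfl
        have h2 : Measurable[ℱ (n+1)] (fun ω => W n ω 0 j) := (ihn 0 j).mono hle le_rfl
        have h3 : Measurable[ℱ (n+1)] (fun ω => W n ω 1 j) := (ihn 1 j).mono hle le_rfl
        exact h1.add ((htbF (n+1)).mul ((h2.const_mul _).add (h3.const_mul _)))
  have hWmeas' : ∀ n i j, Measurable (fun ω => W n ω i j) :=
    fun n i j => (hWmeas n i j).mono (ℱ.le n) le_rfl
  -- L² bounds
  have hlt : ∀ n, (∫⁻ ω, ENNReal.ofReal ((tb n ω) ^ 2) ∂P) < ⊤ :=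
    fun n => lt_of_le_of_lt (ENNReal.le_tsum n) hsum
  have htb2 : ∀ n, Integrable (fun ω => tb n ω ^ 2) P := by
    intro n
    refine ⟨((htbmeas n).pow_const 2).aestronglyMeasurable, ?_⟩
    rw [hasFiniteIntegral_iff_ofReal (ae_of_all _ fun ω => sq_nonneg (tb n ω))]
    exact hlt n
  have htbL2 : ∀ n, MemLp (tb n) 2 P := fun n =>
    (memLp_two_iff_integrable_sq (htbmeas n).aestronglyMeasurable).mpr (htb2 n)
  have htbint : ∀ n, Integrable (tb n) P := fun n =>
    (htbL2 n).integrable (by norm_num)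
  -- L² membership of the entries of W
  have hWL2 : ∀ n i j, MemLp (fun ω => W n ω i j) 2 P := by
    intro n
    induction n with
    | zero => intro i j; simpa [hW0] using memLp_const (μ := P) ((1 : Matrix (Fin 2) (Fin 2) ℝ) i j)
    | succ n ihn =>
        intro i j
        have hrec : (fun ω => W (n + 1) ω i j)
            = fun ω => W n ω i j + tb (n + 1) ω *
              (Bm n i 0 * W n ω 0 j + Bm n i 1 * W n ω 1 j) := by
          funext ω
          have : W (n + 1) ω = W n ω + tb (n + 1) ω • (Bm n * W n ω) := rfl
          rw [this]
          simp [Matrix.add_apply, Matrix.smul_apply, Matrix.mul_apply, Fin.sum_univ_two,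
            smul_eq_mul]
        rw [hrec]
        set Y : Ω → ℝ := fun ω => Bm n i 0 * W n ω 0 j + Bm n i 1 * W n ω 1 j with hYdef
        have hYL2 : MemLp Y 2 P := ((ihn 0 j).const_mul _).add ((ihn 1 j).const_mul _)
        have hYmeas : Measurable[ℱ n] Y :=
          (((hWmeas n 0 j).const_mul _).add ((hWmeas n 1 j).const_mul _))
        have hXY : IndepFun (tb (n + 1)) Y P := hIndepFun n Y hYmeas
        have hXY2 : IndepFun (fun ω => tb (n + 1) ω ^ 2) (fun ω => Y ω ^ 2) P :=
          hXY.comp (measurable_id.pow_const 2) (measurable_id.pow_const 2)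
        have hprod2 : Integrable (fun ω => (tb (n + 1) ω * Y ω) ^ 2) P := by
          have := hXY2.integrable_mul (htb2 (n + 1)) hYL2.integrable_sq
          have heq : (fun ω => (tb (n + 1) ω * Y ω) ^ 2)
              = (fun ω => tb (n + 1) ω ^ 2) * (fun ω => Y ω ^ 2) := by
            funext ω; simp [mul_pow]
          rw [heq]
          exact this
        have hprodL2 : MemLp (fun ω => tb (n + 1) ω * Y ω) 2 P := by
          refine (memLp_two_iff_integrable_sq ?_).mpr hprod2
          exact ((htbmeas (n+1)).mul (hYmeas.mono (ℱ.le n) le_rfl)).aestronglyMeasurable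
        exact (ihn i j).add hprodL2
  have hBWL2 : ∀ n i j, MemLp (fun ω => (Bm n * W n ω) i j) 2 P := by
    intro n i j
    have hrec : (fun ω => (Bm n * W n ω) i j)
        = fun ω => Bm n i 0 * W n ω 0 j + Bm n i 1 * W n ω 1 j := by
      funext ω; simp [Matrix.mul_apply, Fin.sum_univ_two]
    rw [hrec]
    exact ((hWL2 n 0 j).const_mul _).add ((hWL2 n 1 j).const_mul _)
  have hBWmeas : ∀ n i j, Measurable[ℱ n] (fun ω => (Bm n * W n ω) i j) := by
    intro n i j
    have hrec : (fun ω => (Bm n * W n ω) i j)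
        = fun ω => Bm n i 0 * W n ω 0 j + Bm n i 1 * W n ω 1 j := by
      funext ω; simp [Matrix.mul_apply, Fin.sum_univ_two]
    rw [hrec]
    exact ((hWmeas n 0 j).const_mul _).add ((hWmeas n 1 j).const_mul _)
  -- integrability of f, g, h
  have hfint : ∀ n, Integrable (f n) P := by
    intro n
    have : f n = fun ω => W n ω 0 0 ^ 2 + W n ω 0 1 ^ 2 + W n ω 1 0 ^ 2 + W n ω 1 1 ^ 2 := rfl
    rw [this]
    exact (((hWL2 n 0 0).integrable_sq.add (hWL2 n 0 1).integrable_sq).add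
      (hWL2 n 1 0).integrable_sq).add (hWL2 n 1 1).integrable_sq
  have hgint : ∀ n, Integrable (g n) P := by
    intro n
    have : g n = fun ω =>
        (2 * (W n ω 0 0 * (Bm n * W n ω) 0 0) + 2 * (W n ω 0 1 * (Bm n * W n ω) 0 1))
        + (2 * (W n ω 1 0 * (Bm n * W n ω) 1 0) + 2 * (W n ω 1 1 * (Bm n * W n ω) 1 1)) := by
      funext ω; simp only [hgdef, frobInner]; ring
    rw [this]
    exact (((integrable_mul_of_memLp_two (hWL2 n 0 0) (hBWL2 n 0 0)).const_mul 2).add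
        ((integrable_mul_of_memLp_two (hWL2 n 0 1) (hBWL2 n 0 1)).const_mul 2)).add
      (((integrable_mul_of_memLp_two (hWL2 n 1 0) (hBWL2 n 1 0)).const_mul 2).add
        ((integrable_mul_of_memLp_two (hWL2 n 1 1) (hBWL2 n 1 1)).const_mul 2))
  have hhint : ∀ n, Integrable (h n) P := by
    intro n
    have : h n = fun ω => (Bm n * W n ω) 0 0 ^ 2 + (Bm n * W n ω) 0 1 ^ 2
        + (Bm n * W n ω) 1 0 ^ 2 + (Bm n * W n ω) 1 1 ^ 2 := rfl
    rw [this]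
    exact (((hBWL2 n 0 0).integrable_sq.add (hBWL2 n 0 1).integrable_sq).add
      (hBWL2 n 1 0).integrable_sq).add (hBWL2 n 1 1).integrable_sq
  -- measurability of f, g, h wrt ℱ n
  have hfmeas : ∀ n, Measurable[ℱ n] (f n) := by
    intro n
    exact ((((hWmeas n 0 0).pow_const 2).add ((hWmeas n 0 1).pow_const 2)).add
      ((hWmeas n 1 0).pow_const 2)).add ((hWmeas n 1 1).pow_const 2)
  have hgmeas : ∀ n, Measurable[ℱ n] (g n) := by
    intro n
    exact (((((hWmeas n 0 0).mul (hBWmeas n 0 0)).add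
      ((hWmeas n 0 1).mul (hBWmeas n 0 1))).add
      ((hWmeas n 1 0).mul (hBWmeas n 1 0))).add
      ((hWmeas n 1 1).mul (hBWmeas n 1 1))).const_mul 2
  have hhmeas : ∀ n, Measurable[ℱ n] (h n) := by
    intro n
    exact ((((hBWmeas n 0 0).pow_const 2).add ((hBWmeas n 0 1).pow_const 2)).add
      ((hBWmeas n 1 0).pow_const 2)).add ((hBWmeas n 1 1).pow_const 2)
  -- pointwise bounds
  have hh_nonneg : ∀ n ω, 0 ≤ h n ω := fun n ω => frobSq_nonneg _
  have hf_nonneg : ∀ n ω, 0 ≤ f n ω := fun n ω => frobSq_nonneg _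
  have hhK : ∀ n ω, h n ω ≤ K * f n ω := by
    intro n ω
    have h1 := frobSq_mul_le (Bm n) (W n ω)
    have h2 := hBmK n
    have h3 := frobSq_nonneg (W n ω)
    have h4 := frobSq_nonneg (Bm n)
    calc h n ω ≤ frobSq (Bm n) * frobSq (W n ω) := h1
      _ ≤ K * f n ω := by exact mul_le_mul_of_nonneg_right h2 h3
  -- second moments
  set v : ℕ → ℝ := fun k => ∫ ω, tb k ω ^ 2 ∂P with hvdef
  have hv0 : ∀ k, 0 ≤ v k := fun k => integral_nonneg fun ω => sq_nonneg _
  -- products with tb are integrable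
  have hgtbint : ∀ n, Integrable (fun ω => g n ω * tb (n + 1) ω) P := by
    intro n
    have := ((hIndepFun n (g n) (hgmeas n)).symm.integrable_mul (hgint n) (htbint (n+1)))
    exact this
  have hhtbint : ∀ n, Integrable (fun ω => h n ω * tb (n + 1) ω ^ 2) P := by
    intro n
    have hXY : IndepFun (h n) (fun ω => tb (n+1) ω ^ 2) P :=
      ((hIndepFun n (h n) (hhmeas n)).symm.comp measurable_id (measurable_id.pow_const 2))
    exact hXY.integrable_mul (hhint n) (htb2 (n+1))
  -- conditional expectations: submartingale property
  have hsubm : ∀ n, f n ≤ᵐ[P] P[f (n + 1)|ℱ n] := by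
    intro n
    have hfunext : f (n + 1) = fun ω =>
        f n ω + (g n ω * tb (n + 1) ω + h n ω * tb (n + 1) ω ^ 2) := by
      funext ω; rw [hfrec n ω]; ring
    have hce1 : P[f (n + 1)|ℱ n] =ᵐ[P]
        P[f n|ℱ n] + P[(fun ω => g n ω * tb (n + 1) ω + h n ω * tb (n + 1) ω ^ 2)|ℱ n] := by
      rw [hfunext]
      exact condExp_add (hfint n) ((hgtbint n).add (hhtbint n)) _
    have hce2 : P[(fun ω => g n ω * tb (n + 1) ω + h n ω * tb (n + 1) ω ^ 2)|ℱ n] =ᵐ[P]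
        P[(fun ω => g n ω * tb (n + 1) ω)|ℱ n] + P[(fun ω => h n ω * tb (n + 1) ω ^ 2)|ℱ n] :=
      condExp_add (hgtbint n) (hhtbint n) _
    -- conditional expectation of tb (n+1) and tb (n+1)^2
    have hcetb : P[tb (n + 1)|ℱ n] =ᵐ[P] fun _ => (0:ℝ) := by
      have := condExp_indep_eq (μ := P) ((htbmeas (n+1)).comap_le) (ℱ.le n)
        (comap_measurable (tb (n+1))).stronglyMeasurable (hIndepF n)
      rw [hmean (n+1)] at this
      exact this
    have hcetb2 : P[(fun ω => tb (n + 1) ω ^ 2)|ℱ n] =ᵐ[P] fun _ => v (n + 1) := by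
      have hm2 : Measurable[MeasurableSpace.comap (tb (n+1)) inferInstance]
          (fun ω => tb (n + 1) ω ^ 2) :=
        ((comap_measurable (tb (n+1))).pow_const 2)
      exact condExp_indep_eq (μ := P) ((htbmeas (n+1)).comap_le) (ℱ.le n)
        hm2.stronglyMeasurable (hIndepF n)
    have hceg : P[(fun ω => g n ω * tb (n + 1) ω)|ℱ n] =ᵐ[P]
        g n * P[tb (n + 1)|ℱ n] :=
      condExp_mul_of_stronglyMeasurable_left (hgmeas n).stronglyMeasurable
        (hgtbint n) (htbint (n+1))
    have hceh : P[(fun ω => h n ω * tb (n + 1) ω ^ 2)|ℱ n] =ᵐ[P]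
        h n * P[(fun ω => tb (n + 1) ω ^ 2)|ℱ n] :=
      condExp_mul_of_stronglyMeasurable_left (hhmeas n).stronglyMeasurable
        (hhtbint n) (htb2 (n+1))
    have hcefn : P[f n|ℱ n] = f n :=
      condExp_of_stronglyMeasurable (ℱ.le n) (hfmeas n).stronglyMeasurable (hfint n)
    filter_upwards [hce1, hce2, hceg, hceh, hcetb, hcetb2] with ω h1 h2 h3 h4 h5 h6
    have hval : (P[f (n + 1)|ℱ n]) ω = f n ω + h n ω * v (n + 1) := by
      rw [h1, Pi.add_apply, hcefn, h2, Pi.add_apply, h3, h4, Pi.mul_apply, Pi.mul_apply, h5, h6]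
      ring
    rw [hval]
    have := mul_nonneg (hh_nonneg n ω) (hv0 (n+1))
    linarith
  -- Submartingale
  have hadp : StronglyAdapted ℱ f := fun n => (hfmeas n).stronglyMeasurable
  have hsub : Submartingale f ℱ P := submartingale_nat hadp hfint hsubm
  -- expectation bound
  have hEfrec : ∀ n, ∫ ω, f (n + 1) ω ∂P ≤ (1 + K * v (n + 1)) * ∫ ω, f n ω ∂P := by
    intro n
    have hfunext : f (n + 1) = fun ω =>
        f n ω + (g n ω * tb (n + 1) ω + h n ω * tb (n + 1) ω ^ 2) := by
      funext ω; rw [hfrec n ω]; ring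
    have hI2 : Integrable (fun ω => g n ω * tb (n + 1) ω + h n ω * tb (n + 1) ω ^ 2) P :=
      (hgtbint n).add (hhtbint n)
    have hint1 : ∫ ω, f (n + 1) ω ∂P = ∫ ω, f n ω ∂P
        + (∫ ω, g n ω * tb (n + 1) ω ∂P + ∫ ω, h n ω * tb (n + 1) ω ^ 2 ∂P) := by
      rw [hfunext, integral_add (hfint n) hI2, integral_add (hgtbint n) (hhtbint n)]
    have hgzero : ∫ ω, g n ω * tb (n + 1) ω ∂P = 0 := by
      have := (hIndepFun n (g n) (hgmeas n)).symm.integral_mul_eq_mul_integral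
        (hgint n).aestronglyMeasurable (htbint (n+1)).aestronglyMeasurable
      rw [hmean (n+1), mul_zero] at this
      exact this
    have hhval : ∫ ω, h n ω * tb (n + 1) ω ^ 2 ∂P = (∫ ω, h n ω ∂P) * v (n + 1) := by
      have hXY : IndepFun (h n) (fun ω => tb (n+1) ω ^ 2) P :=
        ((hIndepFun n (h n) (hhmeas n)).symm.comp measurable_id (measurable_id.pow_const 2))
      exact hXY.integral_mul_eq_mul_integral (hhint n).aestronglyMeasurable (htb2 (n+1)).aestronglyMeasurable
    have hhbound : ∫ ω, h n ω ∂P ≤ K * ∫ ω, f n ω ∂P := by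
      calc ∫ ω, h n ω ∂P ≤ ∫ ω, K * f n ω ∂P :=
            integral_mono (hhint n) ((hfint n).const_mul K) (fun ω => hhK n ω)
        _ = K * ∫ ω, f n ω ∂P := integral_const_mul K (f n)
    have hfn0 : 0 ≤ ∫ ω, f n ω ∂P := integral_nonneg (fun ω => hf_nonneg n ω)
    have hhn0 : 0 ≤ ∫ ω, h n ω ∂P := integral_nonneg (fun ω => hh_nonneg n ω)
    rw [hint1, hgzero]
    have : (∫ ω, h n ω ∂P) * v (n + 1) ≤ (K * ∫ ω, f n ω ∂P) * v (n + 1) :=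
      mul_le_mul_of_nonneg_right hhbound (hv0 (n+1))
    nlinarith
  set lint : ℕ → ℝ≥0∞ := fun k => ∫⁻ ω, ENNReal.ofReal ((tb k ω) ^ 2) ∂P with hlintdef
  set S : ℝ := (∑' k, lint k).toReal with hSdef
  have hvlint : ∀ k, v k = (lint k).toReal := by
    intro k
    rw [hvdef]
    exact integral_eq_lintegral_of_nonneg_ae (ae_of_all _ fun ω => sq_nonneg _)
      ((htbmeas k).pow_const 2).aestronglyMeasurable
  have hSv : ∀ n, ∑ k ∈ Finset.range n, v (k + 1) ≤ S := by
    intro n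
    have hne : ∀ k, lint k ≠ ⊤ := fun k => (hlt k).ne
    have h1 : ∑ k ∈ Finset.range n, v (k + 1)
        = (∑ k ∈ Finset.range n, lint (k + 1)).toReal := by
      rw [ENNReal.toReal_sum (fun a _ => hne (a+1))]
      exact Finset.sum_congr rfl fun k _ => hvlint (k+1)
    rw [h1, hSdef]
    refine ENNReal.toReal_mono hsum.ne ?_
    calc ∑ k ∈ Finset.range n, lint (k + 1) ≤ ∑' k, lint (k + 1) :=
          ENNReal.sum_le_tsum (Finset.range n)
      _ ≤ ∑' k, lint k := ENNReal.tsum_comp_le_tsum_of_injective Nat.succ_injective lint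
  have hEf : ∀ n, ∫ ω, f n ω ∂P ≤ 2 * Real.exp (K * ∑ k ∈ Finset.range n, v (k + 1)) := by
    intro n
    induction n with
    | zero =>
        have : f 0 = fun _ => (2:ℝ) := by
          funext ω
          show frobSq (W 0 ω) = 2
          rw [hW0]
          simp [frobSq, Matrix.one_apply]
          norm_num
        rw [this]
        simp
    | succ n ih =>
        have h1 := hEfrec n
        have hfn0 : 0 ≤ ∫ ω, f n ω ∂P := integral_nonneg (fun ω => hf_nonneg n ω)
        have h2 : (1 + K * v (n + 1)) ≤ Real.exp (K * v (n + 1)) := by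
          have := Real.add_one_le_exp (K * v (n + 1))
          linarith
        have h3 : (0:ℝ) ≤ 1 + K * v (n + 1) := by
          have := mul_nonneg hK0 (hv0 (n+1)); linarith
        calc ∫ ω, f (n + 1) ω ∂P ≤ (1 + K * v (n + 1)) * ∫ ω, f n ω ∂P := h1
          _ ≤ Real.exp (K * v (n + 1)) * (2 * Real.exp (K * ∑ k ∈ Finset.range n, v (k + 1))) := by
              apply mul_le_mul h2 ih hfn0 (le_of_lt (Real.exp_pos _))
          _ = 2 * Real.exp (K * ∑ k ∈ Finset.range (n + 1), v (k + 1)) := by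
              rw [Finset.sum_range_succ, mul_add, Real.exp_add]
              ring
  have hbound : ∀ n, ∫ ω, f n ω ∂P ≤ 2 * Real.exp (K * S) := by
    intro n
    refine (hEf n).trans ?_
    have : K * ∑ k ∈ Finset.range n, v (k + 1) ≤ K * S :=
      mul_le_mul_of_nonneg_left (hSv n) hK0
    have := Real.exp_le_exp.mpr this
    linarith
  -- L¹ bound for Doob
  set R : ℝ≥0 := (2 * Real.exp (K * S)).toNNReal with hRdef
  have hL1 : ∀ n, eLpNorm (f n) 1 P ≤ R := by
    intro n
    rw [eLpNorm_one_eq_lintegral_enorm]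
    have h1 : ∫⁻ ω, ‖f n ω‖ₑ ∂P = ∫⁻ ω, ENNReal.ofReal (f n ω) ∂P :=
      lintegral_congr fun ω => Real.enorm_eq_ofReal (hf_nonneg n ω)
    have h2 : ENNReal.ofReal (∫ ω, f n ω ∂P) = ∫⁻ ω, ENNReal.ofReal (f n ω) ∂P :=
      ofReal_integral_eq_lintegral_ofReal (hfint n) (ae_of_all _ fun ω => hf_nonneg n ω)
    rw [h1, ← h2]
    calc ENNReal.ofReal (∫ ω, f n ω ∂P) ≤ ENNReal.ofReal (2 * Real.exp (K * S)) :=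
          ENNReal.ofReal_le_ofReal (hbound n)
      _ = (R : ℝ≥0∞) := rfl
  -- Doob convergence
  have hdoob := hsub.ae_tendsto_limitProcess hL1
  filter_upwards [hdoob] with ω hω
  have hbd : BddAbove (Set.range fun n => f n ω) := hω.bddAbove_range
  obtain ⟨Mf, hMf⟩ := hbd
  have hMf' : ∀ n, f n ω ≤ Mf := fun n => hMf (Set.mem_range_self n)
  refine ⟨Real.sqrt (4 * C ^ 2 * Mf), fun n => ?_⟩
  have hfact := transfer_factor b E tb ω n
  rw [hfact]
  refine (opNorm_le_sqrt_frobSq _).trans ?_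
  refine Real.sqrt_le_sqrt ?_
  have h1 : frobSq (T n * W n ω) ≤ frobSq (T n) * frobSq (W n ω) := frobSq_mul_le _ _
  have h2 := hfrobT n
  have h3 := hf_nonneg n ω
  have h4 := hMf' n
  have h5 : frobSq (W n ω) ≤ Mf := h4
  have hC0 : (0:ℝ) ≤ C := le_trans zero_le_one hC1
  nlinarith
end

section
/- Let φ₁, φ₂ : {1,2,…} → ℝ with lim_{L→∞} ‖φ₁‖_L = ∞, and suppose there exist constants D > 0, η ≥ 0 and L₀ ≥ 1 such that ‖φ₂‖_L ≤ D · L^η · ‖φ₁‖_L for all L ≥ L₀. Let η̃ > η and let d : {1,2,…} → ℝ satisfy lim_{n→∞} n^{η̃} d(n) = 0. Then lim_{L→∞} ‖d·φ₂‖_L / ‖φ₁‖_L = 0, where d·φ₂ denotes the pointwise product (d·φ₂)(n) = d(n)φ₂(n). -/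
open Filter Finset
open scoped Topology

noncomputable def truncNorm (f : ℕ → ℝ) (L : ℝ) : ℝ :=
  Real.sqrt ((∑ n ∈ Finset.Icc 1 ⌊L⌋₊, (f n) ^ 2) +
    (L - (⌊L⌋₊ : ℝ)) * (f (⌊L⌋₊ + 1)) ^ 2)

namespace TruncAux

noncomputable def Q (f : ℕ → ℝ) (L : ℝ) : ℝ :=
  (∑ n ∈ Finset.Icc 1 ⌊L⌋₊, (f n) ^ 2) + (L - (⌊L⌋₊ : ℝ)) * (f (⌊L⌋₊ + 1)) ^ 2

lemma truncNorm_eq (f : ℕ → ℝ) (L : ℝ) : truncNorm f L = Real.sqrt (Q f L) := rfl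

lemma Q_nonneg (f : ℕ → ℝ) {L : ℝ} (hL : 0 ≤ L) : 0 ≤ Q f L := by
  have h1 : (⌊L⌋₊ : ℝ) ≤ L := Nat.floor_le hL
  have h3 : 0 ≤ (L - (⌊L⌋₊ : ℝ)) * (f (⌊L⌋₊ + 1)) ^ 2 :=
    mul_nonneg (by linarith) (sq_nonneg _)
  have h2 : 0 ≤ ∑ n ∈ Finset.Icc 1 ⌊L⌋₊, (f n) ^ 2 :=
    Finset.sum_nonneg fun _ _ => sq_nonneg _
  unfold Q; linarith

lemma Q_mono (f : ℕ → ℝ) {L L' : ℝ} (hL : 0 ≤ L) (h : L ≤ L') : Q f L ≤ Q f L' := by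
  have hL' : 0 ≤ L' := le_trans hL h
  have hK : ⌊L⌋₊ ≤ ⌊L'⌋₊ := Nat.floor_mono h
  rcases eq_or_lt_of_le hK with he | hlt
  · unfold Q
    rw [← he]
    have h2 : (L - (⌊L⌋₊ : ℝ)) * (f (⌊L⌋₊ + 1)) ^ 2 ≤
        (L' - (⌊L⌋₊ : ℝ)) * (f (⌊L⌋₊ + 1)) ^ 2 :=
      mul_le_mul_of_nonneg_right (by linarith) (sq_nonneg _)
    linarith
  · have hfl : L < (⌊L⌋₊ : ℝ) + 1 := Nat.lt_floor_add_one L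
    have h1 : Q f L ≤ ∑ n ∈ Finset.Icc 1 (⌊L⌋₊ + 1), (f n) ^ 2 := by
      rw [Finset.sum_Icc_succ_top (by omega : 1 ≤ ⌊L⌋₊ + 1)]
      unfold Q
      nlinarith [sq_nonneg (f (⌊L⌋₊ + 1))]
    have h2 : ∑ n ∈ Finset.Icc 1 (⌊L⌋₊ + 1), (f n) ^ 2 ≤
        ∑ n ∈ Finset.Icc 1 ⌊L'⌋₊, (f n) ^ 2 := by
      apply Finset.sum_le_sum_of_subset_of_nonneg
      · exact Finset.Icc_subset_Icc_right (by omega)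
      · intro _ _ _; exact sq_nonneg _
    have h3 : ∑ n ∈ Finset.Icc 1 ⌊L'⌋₊, (f n) ^ 2 ≤ Q f L' := by
      unfold Q
      have : (⌊L'⌋₊ : ℝ) ≤ L' := Nat.floor_le hL'
      nlinarith [sq_nonneg (f (⌊L'⌋₊ + 1))]
    linarith

lemma Q_natCast (f : ℕ → ℝ) (n : ℕ) :
    Q f (n : ℝ) = ∑ k ∈ Finset.Icc 1 n, (f k) ^ 2 := by
  simp [Q, Nat.floor_natCast]

lemma abel (S b : ℕ → ℝ) (M : ℕ) : ∀ K, M ≤ K →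
    ∑ n ∈ Ioc M K, b n * (S n - S (n - 1)) =
      (∑ n ∈ Ioc M K, (b n - b (n + 1)) * S n) + b (K + 1) * S K - b (M + 1) * S M := by
  intro K hK
  induction K, hK using Nat.le_induction with
  | base => simp
  | succ K hK ih =>
    rw [Finset.sum_Ioc_succ_top (by omega), Finset.sum_Ioc_succ_top (by omega), ih]
    simp only [Nat.add_sub_cancel]
    ring

lemma sq_rpow {x : ℝ} (hx : 0 ≤ x) (r : ℝ) : (x ^ r) ^ 2 = x ^ (2 * r) := by
  rw [← Real.rpow_natCast (x ^ r) 2, ← Real.rpow_mul hx]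
  congr 1; push_cast; ring

lemma sqrt_two_lt_two : Real.sqrt 2 < 2 := by
  nlinarith [Real.sq_sqrt (show (0:ℝ) ≤ 2 by norm_num), Real.sqrt_nonneg 2]

lemma rpow_diff_le {a x : ℝ} (ha : 0 < a) (hx : 1 ≤ x) :
    x ^ (-a) - (x + 1) ^ (-a) ≤ a * x ^ (-a - 1) := by
  have hx0 : 0 < x := lt_of_lt_of_le one_pos hx
  have hpos : 0 < 1 + 1 / x := by positivity
  have h1 : 1 - a * (1 / x) ≤ (1 + 1 / x) ^ (-a) := by
    rw [Real.rpow_def_of_pos hpos]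
    have hlog : Real.log (1 + 1 / x) ≤ 1 / x := by
      have := Real.log_le_sub_one_of_pos hpos
      linarith
    have hexp := Real.add_one_le_exp (Real.log (1 + 1 / x) * (-a))
    have hmul : a * Real.log (1 + 1 / x) ≤ a * (1 / x) :=
      mul_le_mul_of_nonneg_left hlog ha.le
    nlinarith
  have h2 : (x + 1) ^ (-a) = x ^ (-a) * (1 + 1 / x) ^ (-a) := by
    rw [← Real.mul_rpow hx0.le hpos.le]
    congr 1
    field_simp
  have h3 : x ^ (-a) * (1 - a * (1 / x)) ≤ (x + 1) ^ (-a) := by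
    rw [h2]
    exact mul_le_mul_of_nonneg_left h1 (Real.rpow_nonneg hx0.le _)
  have h4 : x ^ (-a - 1) = x ^ (-a) * x⁻¹ := by
    rw [show -a - 1 = -a + -1 by ring, Real.rpow_add hx0, Real.rpow_neg_one]
  have heq : x ^ (-a) * (1 - a * (1 / x)) = x ^ (-a) - a * (x ^ (-a) * x⁻¹) := by
    rw [one_div]; ring
  rw [heq] at h3
  rw [h4]; linarith

end TruncAux



open TruncAux in
set_option maxHeartbeats 1000000 in
/-- the summation-by-parts estimate in the proof of
Theorem 1.3 of Breuer–Last: if `‖φ₁‖_L → ∞`, `‖φ₂‖_L ≤ D L^η ‖φ₁‖_L` for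
`L ≥ L₀`, and `n^η̃ d n → 0` for some `η̃ > η`, then
`‖d·φ₂‖_L / ‖φ₁‖_L → 0`. -/
theorem truncNorm_ratio_tendsto_zero
    (φ1 φ2 : ℕ → ℝ)
    (hφ1 : Tendsto (fun L : ℝ => truncNorm φ1 L) atTop atTop)
    (D η L₀ : ℝ) (hD : 0 < D) (hη : 0 ≤ η) (hL₀ : 1 ≤ L₀)
    (hbound : ∀ L : ℝ, L₀ ≤ L → truncNorm φ2 L ≤ D * L ^ η * truncNorm φ1 L)
    (ηt : ℝ) (hηt : η < ηt)
    (d : ℕ → ℝ)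
    (hd : Tendsto (fun n : ℕ => (n : ℝ) ^ ηt * d n) atTop (𝓝 0)) :
    Tendsto (fun L : ℝ => truncNorm (fun n => d n * φ2 n) L / truncNorm φ1 L)
      atTop (𝓝 0) := by
  have hηt0 : 0 < ηt := lt_of_le_of_lt hη hηt
  obtain ⟨a, ha_def⟩ : ∃ x : ℝ, x = 2 * ηt := ⟨_, rfl⟩
  have ha : 0 < a := by rw [ha_def]; positivity
  obtain ⟨p, hp_def⟩ : ∃ x : ℝ, x = 2 * η - 2 * ηt - 1 := ⟨_, rfl⟩
  have hp : p < -1 := by rw [hp_def]; linarith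
  have hsum : Summable (fun n : ℕ => (n : ℝ) ^ p) := Real.summable_nat_rpow.mpr hp
  obtain ⟨C₀, hC₀def⟩ : ∃ x : ℝ, x = ∑' n : ℕ, (n : ℝ) ^ p := ⟨_, rfl⟩
  have hC₀ : 0 ≤ C₀ := by
    rw [hC₀def]
    exact tsum_nonneg fun n => Real.rpow_nonneg (Nat.cast_nonneg n) _
  obtain ⟨C, hCdef⟩ : ∃ x : ℝ, x = D ^ 2 * (a * C₀ + 2) := ⟨_, rfl⟩
  have hC : 0 < C := by
    rw [hCdef]
    nlinarith [pow_pos hD 2, mul_nonneg ha.le hC₀]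
  rw [Metric.tendsto_atTop]
  intro ε hε
  obtain ⟨ε', hε'def⟩ : ∃ x : ℝ, x = ε / 2 := ⟨_, rfl⟩
  have hε' : 0 < ε' := by rw [hε'def]; positivity
  obtain ⟨δ, hδdef⟩ : ∃ x : ℝ, x = min 1 (ε' ^ 2 / C) := ⟨_, rfl⟩
  have hδ : 0 < δ := by rw [hδdef]; exact lt_min one_pos (by positivity)
  have hδC : δ ^ 2 * C ≤ ε' ^ 2 := by
    have h1 : δ ≤ 1 := by rw [hδdef]; exact min_le_left _ _
    have h2 : δ ≤ ε' ^ 2 / C := by rw [hδdef]; exact min_le_right _ _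
    have h3 : δ * C ≤ ε' ^ 2 := (le_div_iff₀ hC).mp h2
    nlinarith [hδ, hC, h1, h3]
  obtain ⟨M₀, hM₀⟩ := Metric.tendsto_atTop.mp hd δ hδ
  obtain ⟨M, hMdef⟩ : ∃ m : ℕ, m = max (max M₀ ⌈L₀⌉₊) 1 := ⟨_, rfl⟩
  have hM1 : 1 ≤ M := by rw [hMdef]; exact le_max_right _ _
  have hMM₀ : M₀ ≤ M := by rw [hMdef]; exact le_trans (le_max_left _ _) (le_max_left _ _)
  have hML₀ : L₀ ≤ (M : ℝ) := by
    have h1 : ⌈L₀⌉₊ ≤ M := by rw [hMdef]; exact le_trans (le_max_right _ _) (le_max_left _ _)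
    exact le_trans (Nat.le_ceil _) (by exact_mod_cast h1)
  have hdM : ∀ n : ℕ, M ≤ n → (d n) ^ 2 ≤ δ ^ 2 * (n : ℝ) ^ (-a) := by
    intro n hn
    have h1 := hM₀ n (le_trans hMM₀ hn)
    rw [Real.dist_eq, sub_zero] at h1
    have hn1 : (1 : ℝ) ≤ (n : ℝ) := by exact_mod_cast le_trans hM1 hn
    have hnpos : (0 : ℝ) < (n : ℝ) := by linarith
    have h2 : ((n : ℝ) ^ ηt * d n) ^ 2 ≤ δ ^ 2 := by
      nlinarith [sq_abs ((n : ℝ) ^ ηt * d n), abs_nonneg ((n : ℝ) ^ ηt * d n), h1, hδ]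
    have h3 : ((n : ℝ) ^ ηt) ^ 2 = (n : ℝ) ^ a := by
      rw [ha_def]; exact sq_rpow hnpos.le ηt
    have key : (n : ℝ) ^ a * (d n) ^ 2 ≤ δ ^ 2 := by
      calc (n : ℝ) ^ a * (d n) ^ 2 = ((n : ℝ) ^ ηt * d n) ^ 2 := by rw [mul_pow, h3]
      _ ≤ δ ^ 2 := h2
    have hna : (0 : ℝ) < (n : ℝ) ^ a := Real.rpow_pos_of_pos hnpos _
    rw [Real.rpow_neg hnpos.le, ← div_eq_mul_inv, le_div_iff₀ hna]
    nlinarith [key]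
  obtain ⟨S, hSdef⟩ : ∃ S : ℕ → ℝ, S = fun n => ∑ k ∈ Finset.Icc 1 n, (φ2 k) ^ 2 := ⟨_, rfl⟩
  have hS_nonneg : ∀ n, 0 ≤ S n := by
    intro n
    simp only [hSdef]
    exact Finset.sum_nonneg fun _ _ => sq_nonneg _
  have hSdiff : ∀ n : ℕ, 1 ≤ n → S n - S (n - 1) = (φ2 n) ^ 2 := by
    intro n hn
    obtain ⟨m, rfl⟩ : ∃ m, n = m + 1 := ⟨n - 1, by omega⟩
    simp only [hSdef, Nat.add_sub_cancel]
    rw [Finset.sum_Icc_succ_top (by omega : 1 ≤ m + 1)]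
    ring
  have hSle : ∀ (n : ℕ) (L : ℝ), M ≤ n → (n : ℝ) ≤ L →
      S n ≤ D ^ 2 * (n : ℝ) ^ (2 * η) * Q φ1 L := by
    intro n L hMn hnL
    have hn1 : (1 : ℝ) ≤ (n : ℝ) := by exact_mod_cast le_trans hM1 hMn
    have hnL₀ : L₀ ≤ (n : ℝ) := le_trans hML₀ (by exact_mod_cast hMn)
    have hb := hbound (n : ℝ) hnL₀
    rw [truncNorm_eq, truncNorm_eq] at hb
    have hQ2 : Q φ2 (n : ℝ) = S n := by rw [hSdef]; exact Q_natCast φ2 n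
    have hQ2n : 0 ≤ Q φ2 (n : ℝ) := Q_nonneg _ (by linarith)
    have hQ1n : 0 ≤ Q φ1 (n : ℝ) := Q_nonneg _ (by linarith)
    have h1 : Real.sqrt (Q φ2 (n : ℝ)) ^ 2 ≤
        (D * (n : ℝ) ^ η * Real.sqrt (Q φ1 (n : ℝ))) ^ 2 :=
      pow_le_pow_left₀ (Real.sqrt_nonneg _) hb 2
    rw [Real.sq_sqrt hQ2n, hQ2] at h1
    have hmono : Q φ1 (n : ℝ) ≤ Q φ1 L := Q_mono _ (by linarith) hnL
    calc S n ≤ (D * (n : ℝ) ^ η * Real.sqrt (Q φ1 (n : ℝ))) ^ 2 := h1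
    _ = D ^ 2 * ((n : ℝ) ^ η) ^ 2 * Real.sqrt (Q φ1 (n : ℝ)) ^ 2 := by ring
    _ = D ^ 2 * (n : ℝ) ^ (2 * η) * Q φ1 (n : ℝ) := by
        rw [sq_rpow (by linarith : (0:ℝ) ≤ (n:ℝ)) η, Real.sq_sqrt hQ1n]
    _ ≤ D ^ 2 * (n : ℝ) ^ (2 * η) * Q φ1 L := by
        apply mul_le_mul_of_nonneg_left hmono
        positivity
  obtain ⟨A, hAdef⟩ : ∃ x : ℝ, x = ∑ n ∈ Finset.Icc 1 M, (d n * φ2 n) ^ 2 := ⟨_, rfl⟩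
  have hA : 0 ≤ A := by
    rw [hAdef]; exact Finset.sum_nonneg fun _ _ => sq_nonneg _
  obtain ⟨t, htdef⟩ : ∃ x : ℝ, x = max 1 (Real.sqrt (A / ε' ^ 2)) := ⟨_, rfl⟩
  have ht0 : (1 : ℝ) ≤ t := by rw [htdef]; exact le_max_left _ _
  have hev : ∀ᶠ L : ℝ in atTop, t ≤ truncNorm φ1 L ∧ (M : ℝ) + 1 ≤ L :=
    (hφ1.eventually_ge_atTop t).and (eventually_ge_atTop _)
  rw [eventually_atTop] at hev
  obtain ⟨N, hN⟩ := hev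
  refine ⟨N, fun L hL => ?_⟩
  obtain ⟨htL, hML⟩ := hN L hL
  have hM1R : (1 : ℝ) ≤ (M : ℝ) := by exact_mod_cast hM1
  have hL1 : (1 : ℝ) ≤ L := by linarith
  have hL0 : (0 : ℝ) ≤ L := by linarith
  have hLpos : (0 : ℝ) < L := by linarith
  obtain ⟨K, hKdef⟩ : ∃ k : ℕ, k = ⌊L⌋₊ := ⟨_, rfl⟩
  have hMK : M ≤ K := by rw [hKdef]; exact Nat.le_floor (by linarith)
  have hK1 : 1 ≤ K := le_trans hM1 hMK
  have hKR1 : (1 : ℝ) ≤ (K : ℝ) := by exact_mod_cast hK1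
  have hKL : (K : ℝ) ≤ L := by rw [hKdef]; exact Nat.floor_le hL0
  have hLK1 : L < (K : ℝ) + 1 := by rw [hKdef]; exact Nat.lt_floor_add_one L
  have hLL₀ : L₀ ≤ L := by linarith
  have hP0 : 0 ≤ Q φ1 L := Q_nonneg _ hL0
  have hPt : t ^ 2 ≤ Q φ1 L := by
    rw [truncNorm_eq] at htL
    exact (Real.le_sqrt (by linarith) hP0).mp htL
  have hP1 : 1 ≤ Q φ1 L := le_trans (by nlinarith [ht0]) hPt
  have hPA : A ≤ ε' ^ 2 * Q φ1 L := by
    have h1 : Real.sqrt (A / ε' ^ 2) ≤ t := by rw [htdef]; exact le_max_right _ _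
    have h2 : A / ε' ^ 2 ≤ t ^ 2 := by
      have h := pow_le_pow_left₀ (Real.sqrt_nonneg (A / ε' ^ 2)) h1 2
      rwa [Real.sq_sqrt (by positivity)] at h
    have h3 : A / ε' ^ 2 ≤ Q φ1 L := le_trans h2 hPt
    calc A = A / ε' ^ 2 * ε' ^ 2 := by field_simp
    _ ≤ Q φ1 L * ε' ^ 2 := by nlinarith [h3, hε']
    _ = ε' ^ 2 * Q φ1 L := by ring
  have hbL := hbound L hLL₀
  rw [truncNorm_eq, truncNorm_eq] at hbL
  have hQ2L : 0 ≤ Q φ2 L := Q_nonneg _ hL0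
  have hQ2Lle : Q φ2 L ≤ D ^ 2 * L ^ (2 * η) * Q φ1 L := by
    have h1 := pow_le_pow_left₀ (Real.sqrt_nonneg (Q φ2 L)) hbL 2
    rw [Real.sq_sqrt hQ2L] at h1
    calc Q φ2 L ≤ (D * L ^ η * Real.sqrt (Q φ1 L)) ^ 2 := h1
    _ = D ^ 2 * (L ^ η) ^ 2 * Real.sqrt (Q φ1 L) ^ 2 := by ring
    _ = D ^ 2 * L ^ (2 * η) * Q φ1 L := by rw [sq_rpow hL0 η, Real.sq_sqrt hP0]
  have htail1 : ∑ n ∈ Finset.Ioc M K, (d n * φ2 n) ^ 2 ≤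
      δ ^ 2 * ∑ n ∈ Finset.Ioc M K, (n : ℝ) ^ (-a) * (S n - S (n - 1)) := by
    rw [Finset.mul_sum]
    apply Finset.sum_le_sum
    intro n hn
    rw [Finset.mem_Ioc] at hn
    have hdn := hdM n hn.1.le
    rw [hSdiff n (by omega)]
    calc (d n * φ2 n) ^ 2 = (d n) ^ 2 * (φ2 n) ^ 2 := by ring
    _ ≤ δ ^ 2 * (n : ℝ) ^ (-a) * (φ2 n) ^ 2 :=
        mul_le_mul_of_nonneg_right hdn (sq_nonneg _)
    _ = δ ^ 2 * ((n : ℝ) ^ (-a) * (φ2 n) ^ 2) := by ring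
  have habel := abel S (fun n : ℕ => ((n : ℝ)) ^ (-a)) M K hMK
  have hterm : ∀ n ∈ Finset.Ioc M K,
      (((n : ℕ) : ℝ) ^ (-a) - (((n + 1 : ℕ)) : ℝ) ^ (-a)) * S n ≤
        (D ^ 2 * Q φ1 L * a) * (n : ℝ) ^ p := by
    intro n hn
    rw [Finset.mem_Ioc] at hn
    have hMn : M ≤ n := hn.1.le
    have hn1 : (1 : ℝ) ≤ (n : ℝ) := by exact_mod_cast le_trans hM1 hMn
    have hnpos : (0 : ℝ) < (n : ℝ) := by linarith
    have hnK : (n : ℝ) ≤ L := le_trans (by exact_mod_cast hn.2) hKL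
    have hSn := hSle n L hMn hnK
    have hcast : (((n + 1 : ℕ)) : ℝ) = (n : ℝ) + 1 := by push_cast; ring
    have hdiff_nonneg : (0 : ℝ) ≤ (n : ℝ) ^ (-a) - (((n + 1 : ℕ)) : ℝ) ^ (-a) := by
      have h := Real.rpow_le_rpow_of_nonpos hnpos
        (show (n:ℝ) ≤ (((n + 1 : ℕ)) : ℝ) by rw [hcast]; linarith)
        (by linarith : -a ≤ 0)
      linarith [h]
    have hdiff_le : (n : ℝ) ^ (-a) - (((n + 1 : ℕ)) : ℝ) ^ (-a) ≤ a * (n : ℝ) ^ (-a - 1) := by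
      have h := rpow_diff_le ha hn1
      rw [← hcast] at h
      exact h
    have hc_nonneg : 0 ≤ D ^ 2 * (n : ℝ) ^ (2 * η) * Q φ1 L :=
      mul_nonneg (by positivity) hP0
    calc ((n : ℝ) ^ (-a) - (((n + 1 : ℕ)) : ℝ) ^ (-a)) * S n
        ≤ ((n : ℝ) ^ (-a) - (((n + 1 : ℕ)) : ℝ) ^ (-a)) *
          (D ^ 2 * (n : ℝ) ^ (2 * η) * Q φ1 L) :=
          mul_le_mul_of_nonneg_left hSn hdiff_nonneg
    _ ≤ (a * (n : ℝ) ^ (-a - 1)) * (D ^ 2 * (n : ℝ) ^ (2 * η) * Q φ1 L) :=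
          mul_le_mul_of_nonneg_right hdiff_le hc_nonneg
    _ = (D ^ 2 * Q φ1 L * a) * ((n : ℝ) ^ (-a - 1) * (n : ℝ) ^ (2 * η)) := by ring
    _ = (D ^ 2 * Q φ1 L * a) * (n : ℝ) ^ p := by
          rw [← Real.rpow_add hnpos]
          congr 1
          rw [hp_def, ha_def]; ring
  have hDQa : 0 ≤ D ^ 2 * Q φ1 L * a := mul_nonneg (mul_nonneg (by positivity) hP0) ha.le
  have hsum1 : ∑ n ∈ Finset.Ioc M K, ((n : ℝ) ^ (-a) - (((n + 1 : ℕ)) : ℝ) ^ (-a)) * S n ≤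
      (D ^ 2 * Q φ1 L * a) * C₀ := by
    calc ∑ n ∈ Finset.Ioc M K, ((n : ℝ) ^ (-a) - (((n + 1 : ℕ)) : ℝ) ^ (-a)) * S n
        ≤ ∑ n ∈ Finset.Ioc M K, (D ^ 2 * Q φ1 L * a) * (n : ℝ) ^ p :=
          Finset.sum_le_sum hterm
    _ = (D ^ 2 * Q φ1 L * a) * ∑ n ∈ Finset.Ioc M K, (n : ℝ) ^ p := by
          rw [Finset.mul_sum]
    _ ≤ (D ^ 2 * Q φ1 L * a) * C₀ := by
          apply mul_le_mul_of_nonneg_left _ hDQa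
          rw [hC₀def]
          exact Summable.sum_le_tsum _ (fun i _ => Real.rpow_nonneg (Nat.cast_nonneg i) _) hsum
  have hbdry : (((K + 1 : ℕ)) : ℝ) ^ (-a) * S K ≤ D ^ 2 * Q φ1 L := by
    have hSK := hSle K L hMK hKL
    have hKpos : (0 : ℝ) < (K : ℝ) := by linarith
    have hcast : (((K + 1 : ℕ)) : ℝ) = (K : ℝ) + 1 := by push_cast; ring
    have h1 : (((K + 1 : ℕ)) : ℝ) ^ (-a) ≤ (K : ℝ) ^ (-a) :=
      Real.rpow_le_rpow_of_nonpos hKpos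
        (show (K:ℝ) ≤ (((K + 1 : ℕ)) : ℝ) by rw [hcast]; linarith) (by linarith)
    have h2 : (((K + 1 : ℕ)) : ℝ) ^ (-a) * S K ≤
        (K : ℝ) ^ (-a) * (D ^ 2 * (K : ℝ) ^ (2 * η) * Q φ1 L) :=
      mul_le_mul h1 hSK (hS_nonneg K) (Real.rpow_nonneg (Nat.cast_nonneg K) _)
    have h3 : (K : ℝ) ^ (-a) * (K : ℝ) ^ (2 * η) = (K : ℝ) ^ (2 * η - a) := by
      rw [← Real.rpow_add hKpos]; congr 1; ring
    have h4 : (K : ℝ) ^ (2 * η - a) ≤ 1 :=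
      Real.rpow_le_one_of_one_le_of_nonpos hKR1 (by rw [ha_def]; linarith)
    calc (((K + 1 : ℕ)) : ℝ) ^ (-a) * S K
        ≤ (K : ℝ) ^ (-a) * (D ^ 2 * (K : ℝ) ^ (2 * η) * Q φ1 L) := h2
    _ = D ^ 2 * Q φ1 L * ((K : ℝ) ^ (-a) * (K : ℝ) ^ (2 * η)) := by ring
    _ = D ^ 2 * Q φ1 L * (K : ℝ) ^ (2 * η - a) := by rw [h3]
    _ ≤ D ^ 2 * Q φ1 L * 1 :=
          mul_le_mul_of_nonneg_left h4 (mul_nonneg (by positivity) hP0)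
    _ = D ^ 2 * Q φ1 L := mul_one _
  have htail2 : ∑ n ∈ Finset.Ioc M K, (n : ℝ) ^ (-a) * (S n - S (n - 1)) ≤
      D ^ 2 * Q φ1 L * (a * C₀ + 1) := by
    rw [habel]
    have hnn : 0 ≤ (((M + 1 : ℕ)) : ℝ) ^ (-a) * S M :=
      mul_nonneg (Real.rpow_nonneg (Nat.cast_nonneg _) _) (hS_nonneg M)
    linarith [hsum1, hbdry, hnn]
  have hQeq2 : Q φ2 L = S K + (L - (K : ℝ)) * (φ2 (K + 1)) ^ 2 := by
    rw [hSdef, hKdef]; rfl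
  have hfrac : (L - (K : ℝ)) * (d (K + 1) * φ2 (K + 1)) ^ 2 ≤ δ ^ 2 * (D ^ 2 * Q φ1 L) := by
    have hd1 := hdM (K + 1) (by omega)
    have hcast : (((K + 1 : ℕ)) : ℝ) = (K : ℝ) + 1 := by push_cast; ring
    have hK1L : L ≤ (((K + 1 : ℕ)) : ℝ) := le_of_le_of_eq (by linarith) hcast.symm
    have h1 : (((K + 1 : ℕ)) : ℝ) ^ (-a) ≤ L ^ (-a) :=
      Real.rpow_le_rpow_of_nonpos hLpos hK1L (by linarith)
    have hd2 : (d (K + 1)) ^ 2 ≤ δ ^ 2 * L ^ (-a) :=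
      le_trans hd1 (mul_le_mul_of_nonneg_left h1 (sq_nonneg δ))
    have hLK0 : 0 ≤ L - (K : ℝ) := by linarith
    have h2 : (L - (K : ℝ)) * (φ2 (K + 1)) ^ 2 ≤ Q φ2 L := by
      have := hS_nonneg K
      linarith [hQeq2]
    calc (L - (K : ℝ)) * (d (K + 1) * φ2 (K + 1)) ^ 2
        = (d (K + 1)) ^ 2 * ((L - (K : ℝ)) * (φ2 (K + 1)) ^ 2) := by ring
    _ ≤ (δ ^ 2 * L ^ (-a)) * ((L - (K : ℝ)) * (φ2 (K + 1)) ^ 2) :=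
        mul_le_mul_of_nonneg_right hd2 (mul_nonneg hLK0 (sq_nonneg _))
    _ ≤ (δ ^ 2 * L ^ (-a)) * Q φ2 L := by
        apply mul_le_mul_of_nonneg_left h2
        positivity
    _ ≤ (δ ^ 2 * L ^ (-a)) * (D ^ 2 * L ^ (2 * η) * Q φ1 L) := by
        apply mul_le_mul_of_nonneg_left hQ2Lle
        positivity
    _ = δ ^ 2 * D ^ 2 * Q φ1 L * (L ^ (-a) * L ^ (2 * η)) := by ring
    _ = δ ^ 2 * D ^ 2 * Q φ1 L * L ^ (2 * η - a) := by
        rw [← Real.rpow_add hLpos]; congr 1; ring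
    _ ≤ δ ^ 2 * D ^ 2 * Q φ1 L * 1 := by
        apply mul_le_mul_of_nonneg_left
          (Real.rpow_le_one_of_one_le_of_nonpos hL1 (by rw [ha_def]; linarith))
        exact mul_nonneg (by positivity) hP0
    _ = δ ^ 2 * (D ^ 2 * Q φ1 L) := by ring
  have hQeqnum : Q (fun n => d n * φ2 n) L =
      (∑ n ∈ Finset.Icc 1 K, (d n * φ2 n) ^ 2) +
        (L - (K : ℝ)) * (d (K + 1) * φ2 (K + 1)) ^ 2 := by
    rw [hKdef]; rfl
  have hsplit : ∑ n ∈ Finset.Icc 1 K, (d n * φ2 n) ^ 2 =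
      A + ∑ n ∈ Finset.Ioc M K, (d n * φ2 n) ^ 2 := by
    rw [hAdef, show Finset.Icc 1 K = Finset.Ioc 0 K from Finset.Icc_add_one_left_eq_Ioc 0 K,
      show Finset.Icc 1 M = Finset.Ioc 0 M from Finset.Icc_add_one_left_eq_Ioc 0 M]
    exact (Finset.sum_Ioc_consecutive _ (Nat.zero_le M) hMK).symm
  have hQnum : Q (fun n => d n * φ2 n) L ≤ A + δ ^ 2 * C * Q φ1 L := by
    rw [hQeqnum, hsplit, hCdef]
    have t1 : ∑ n ∈ Finset.Ioc M K, (d n * φ2 n) ^ 2 ≤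
        δ ^ 2 * (D ^ 2 * Q φ1 L * (a * C₀ + 1)) :=
      le_trans htail1 (mul_le_mul_of_nonneg_left htail2 (sq_nonneg δ))
    linarith [t1, hfrac]
  have hQfinal : Q (fun n => d n * φ2 n) L ≤ 2 * ε' ^ 2 * Q φ1 L := by
    have h1 : δ ^ 2 * C * Q φ1 L ≤ ε' ^ 2 * Q φ1 L :=
      mul_le_mul_of_nonneg_right hδC hP0
    linarith [hQnum, hPA, h1]
  have hsP : 0 < Real.sqrt (Q φ1 L) := Real.sqrt_pos.mpr (by linarith)
  have hnum : truncNorm (fun n => d n * φ2 n) L ≤ Real.sqrt 2 * ε' * Real.sqrt (Q φ1 L) := by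
    rw [truncNorm_eq]
    calc Real.sqrt (Q (fun n => d n * φ2 n) L)
        ≤ Real.sqrt (2 * ε' ^ 2 * Q φ1 L) := Real.sqrt_le_sqrt hQfinal
    _ = Real.sqrt (2 * ε' ^ 2) * Real.sqrt (Q φ1 L) := Real.sqrt_mul (by positivity) _
    _ = Real.sqrt 2 * ε' * Real.sqrt (Q φ1 L) := by
        rw [Real.sqrt_mul (by norm_num : (0:ℝ) ≤ 2) (ε' ^ 2), Real.sqrt_sq hε'.le]
  have hratio : truncNorm (fun n => d n * φ2 n) L / truncNorm φ1 L ≤ Real.sqrt 2 * ε' := by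
    rw [truncNorm_eq φ1, div_le_iff₀ hsP]
    exact hnum
  have hlt : Real.sqrt 2 * ε' < ε := by
    have h2 : Real.sqrt 2 < 2 := sqrt_two_lt_two
    have h3 : Real.sqrt 2 * ε' < 2 * ε' :=
      mul_lt_mul_of_pos_right h2 hε'
    have h4 : 2 * ε' = ε := by rw [hε'def]; ring
    linarith only [h3, h4]
  have hnn : 0 ≤ truncNorm (fun n => d n * φ2 n) L / truncNorm φ1 L := by
    rw [truncNorm_eq, truncNorm_eq]
    positivity
  rw [Real.dist_eq, sub_zero, abs_of_nonneg hnn]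
  linarith only [hratio, hlt]
end

section
/- Let γ ≥ 2 be an integer, set n_j = γ^j for j ≥ 1, and let 0 < β₁ < β₂ < 1/2. Let φ₁, φ₂ : {1,2,…} → ℝ and suppose there exist ε > 0 and N₀ such that for all n ≥ N₀, if j is the index with n_j < n ≤ n_{j+1}, then (φ₁(n−1)² + φ₁(n)²)^{1/2} ≤ n_j^{−β₁−ε} and n_j^{β₁} ≤ (φ₂(n−1)² + φ₂(n)²)^{1/2} ≤ n_j^{β₂}. If s > 4β₂/(1 − 2β₂) − 2β₁ + 1/2, then there exists η̃ > 4β₂/(1 − 2β₂) such that Σ_{n=1}^∞ (|φ₁(n)|⁴ n^{2η̃} + |φ₂(n)|⁴) · n^{−2s} < ∞. -/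
/-!
On the block `n_j < n ≤ n_{j+1}` we have `n_j < n ≤ γ n_j`, so the block bounds give
`|φ₁ n| ≤ C n^{-β₁-ε}` and `|φ₂ n| ≤ C n^{β₂}` with `C` depending only on `γ`. The series is then
dominated by the `p`-series with exponents `2η̃ - 2s - 4β₁ - 4ε` and `4β₂ - 2s`. Any `η̃`
strictly between `4β₂/(1 - 2β₂)` and `s + 2β₁ - 1/2` works; the hypothesis on `s` is exactly that
this interval is nonempty, and `4β₂ ≤ 4β₂/(1 - 2β₂)` together with `β₁ < β₂` makes the second
exponent `< -1`.
-/

open Filter Real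

lemma Real.rpow_le_rpow_abs_mul_rpow {c x y : ℝ} (r : ℝ) (hc : 1 ≤ c) (hx : 0 < x) (hxy : x ≤ y)
    (hyc : y ≤ c * x) : x ^ r ≤ c ^ |r| * y ^ r := by
  rcases le_total 0 r with hr | hr
  · rw [abs_of_nonneg hr]
    calc x ^ r ≤ y ^ r := rpow_le_rpow hx.le hxy hr
      _ ≤ c ^ r * y ^ r :=
          le_mul_of_one_le_left (rpow_nonneg (hx.le.trans hxy) r) (one_le_rpow hc hr)
  · have hc₀ : 0 < c := by linarith
    rw [abs_of_nonpos hr]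
    calc x ^ r ≤ (y / c) ^ r :=
          rpow_le_rpow_of_nonpos (div_pos (hx.trans_le hxy) hc₀)
            (div_le_of_le_mul₀ hc₀.le hx.le (by rwa [mul_comm])) hr
      _ = c ^ (-r) * y ^ r := by
          rw [div_rpow (hx.le.trans hxy) hc₀.le, rpow_neg hc₀.le, div_eq_inv_mul]

lemma Nat.exists_pow_lt_le_pow_succ {b n : ℕ} (hb : 1 < b) (hn : b < n) :
    ∃ j, 1 ≤ j ∧ b ^ j < n ∧ n ≤ b ^ (j + 1) := by
  refine ⟨Nat.log b (n - 1), ?_, ?_, ?_⟩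
  · rw [Nat.le_log_iff_pow_le hb (by omega), pow_one]
    omega
  · have := Nat.pow_log_le_self b (x := n - 1) (by omega)
    omega
  · have : n - 1 < b ^ (Nat.log b (n - 1) + 1) := Nat.lt_pow_succ_log_self hb (n - 1)
    omega

lemma eventually_abs_le_rpow_of_forall_pow_lt_le_pow_succ {γ N₀ : ℕ} (hγ : 1 < γ) {a : ℕ → ℝ}
    {r : ℝ} (h : ∀ j : ℕ, 1 ≤ j → ∀ n : ℕ, N₀ ≤ n → γ ^ j < n → n ≤ γ ^ (j + 1) →
      |a n| ≤ ((γ : ℝ) ^ j) ^ r) :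
    ∀ᶠ n : ℕ in atTop, |a n| ≤ (γ : ℝ) ^ |r| * (n : ℝ) ^ r := by
  filter_upwards [eventually_ge_atTop N₀, eventually_gt_atTop γ] with n hN₀ hγn
  obtain ⟨j, hj, hlo, hhi⟩ := Nat.exists_pow_lt_le_pow_succ hγ hγn
  refine (h j hj n hN₀ hlo hhi).trans (rpow_le_rpow_abs_mul_rpow r ?_ (by positivity) ?_ ?_)
  · exact_mod_cast hγ.le
  · exact_mod_cast hlo.le
  · rw [← pow_succ']
    exact_mod_cast hhi

lemma summable_abs_pow_mul_rpow {a : ℕ → ℝ} {C r t : ℝ} (k : ℕ)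
    (ha : ∀ᶠ n : ℕ in atTop, |a n| ≤ C * (n : ℝ) ^ r) (h : k * r + t < -1) :
    Summable fun n : ℕ => |a n| ^ k * (n : ℝ) ^ t := by
  refine ((summable_nat_rpow.2 h).mul_left (C ^ k)).of_norm_bounded_eventually_nat ?_
  filter_upwards [ha, eventually_gt_atTop 0] with n han hn
  have hn' : (0 : ℝ) < n := by exact_mod_cast hn
  rw [norm_eq_abs, abs_mul, abs_pow, abs_abs, abs_of_nonneg (by positivity : (0 : ℝ) ≤ (n : ℝ) ^ t)]
  calc |a n| ^ k * (n : ℝ) ^ t ≤ (C * (n : ℝ) ^ r) ^ k * (n : ℝ) ^ t := by gcongr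
    _ = C ^ k * (n : ℝ) ^ (k * r + t) := by
      rw [mul_pow, ← rpow_natCast ((n : ℝ) ^ r), ← rpow_mul hn'.le, rpow_add hn', mul_comm r]
      ring

theorem sparse_potential_summability_general
    (γ : ℕ) (hγ : 2 ≤ γ) (β₁ β₂ : ℝ)
    (hβ₁₂ : β₁ < β₂) (hβ₂ : β₂ < 1 / 2)
    (φ1 φ2 : ℕ → ℝ)
    (hbounds : ∃ ε : ℝ, 0 < ε ∧ ∃ N₀ : ℕ, ∀ j : ℕ, 1 ≤ j → ∀ n : ℕ,
      N₀ ≤ n → γ ^ j < n → n ≤ γ ^ (j + 1) →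
        Real.sqrt ((φ1 (n - 1)) ^ 2 + (φ1 n) ^ 2) ≤
            ((γ : ℝ) ^ j) ^ (-β₁ - ε) ∧
          ((γ : ℝ) ^ j) ^ β₁ ≤ Real.sqrt ((φ2 (n - 1)) ^ 2 + (φ2 n) ^ 2) ∧
          Real.sqrt ((φ2 (n - 1)) ^ 2 + (φ2 n) ^ 2) ≤ ((γ : ℝ) ^ j) ^ β₂)
    (s : ℝ) (hs : 4 * β₂ / (1 - 2 * β₂) - 2 * β₁ + 1 / 2 < s) :
    ∃ ηt : ℝ, 4 * β₂ / (1 - 2 * β₂) < ηt ∧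
      Summable (fun n : ℕ =>
        (|φ1 n| ^ 4 * (n : ℝ) ^ (2 * ηt) + |φ2 n| ^ 4) *
          (n : ℝ) ^ (-(2 * s))) := by
  obtain ⟨ε, hε, N₀, hB⟩ := hbounds
  have hφ1 := eventually_abs_le_rpow_of_forall_pow_lt_le_pow_succ hγ fun j hj n hn hlo hhi =>
    (abs_le_sqrt (le_add_of_nonneg_left (sq_nonneg _))).trans (hB j hj n hn hlo hhi).1
  have hφ2 := eventually_abs_le_rpow_of_forall_pow_lt_le_pow_succ hγ fun j hj n hn hlo hhi =>
    (abs_le_sqrt (le_add_of_nonneg_left (sq_nonneg _))).trans (hB j hj n hn hlo hhi).2.2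
  have hβ₂_le : 4 * β₂ ≤ 4 * β₂ / (1 - 2 * β₂) := by
    rw [le_div_iff₀ (by linarith)]
    nlinarith [sq_nonneg β₂]
  obtain ⟨ηt, hηt, hηts⟩ := exists_between (show 4 * β₂ / (1 - 2 * β₂) < s + 2 * β₁ - 1 / 2 by
    linarith)
  refine ⟨ηt, hηt, ?_⟩
  have hsum₁ := summable_abs_pow_mul_rpow 4 hφ1 (t := 2 * ηt - 2 * s) (by push_cast; linarith)
  have hsum₂ := summable_abs_pow_mul_rpow 4 hφ2 (t := -(2 * s)) (by push_cast; linarith)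
  refine (hsum₁.add hsum₂).congr_atTop ?_
  filter_upwards [eventually_gt_atTop 0] with n hn
  rw [add_mul, mul_assoc, ← rpow_add (by positivity), sub_eq_add_neg]

/-- the summability verification for Zlatoš's sparse
potentials, Section 5 of Breuer–Last: with `n_j = γ^j` and solutions
satisfying the sparse-potential bounds with exponents `0 < β₁ < β₂ < 1/2`,
if `s > 4β₂/(1 − 2β₂) − 2β₁ + 1/2` then there is `η̃ > 4β₂/(1 − 2β₂)` with
`∑ (|φ₁ n|⁴ n^{2η̃} + |φ₂ n|⁴) n^{−2s} < ∞`. -/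
theorem sparse_potential_summability
    (γ : ℕ) (hγ : 2 ≤ γ) (β₁ β₂ : ℝ)
    (hβ₁ : 0 < β₁) (hβ₁₂ : β₁ < β₂) (hβ₂ : β₂ < 1 / 2)
    (φ1 φ2 : ℕ → ℝ)
    (hbounds : ∃ ε : ℝ, 0 < ε ∧ ∃ N₀ : ℕ, ∀ j : ℕ, 1 ≤ j → ∀ n : ℕ,
      N₀ ≤ n → γ ^ j < n → n ≤ γ ^ (j + 1) →
        Real.sqrt ((φ1 (n - 1)) ^ 2 + (φ1 n) ^ 2) ≤
            ((γ : ℝ) ^ j) ^ (-β₁ - ε) ∧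
          ((γ : ℝ) ^ j) ^ β₁ ≤ Real.sqrt ((φ2 (n - 1)) ^ 2 + (φ2 n) ^ 2) ∧
          Real.sqrt ((φ2 (n - 1)) ^ 2 + (φ2 n) ^ 2) ≤ ((γ : ℝ) ^ j) ^ β₂)
    (s : ℝ) (hs : 4 * β₂ / (1 - 2 * β₂) - 2 * β₁ + 1 / 2 < s) :
    ∃ ηt : ℝ, 4 * β₂ / (1 - 2 * β₂) < ηt ∧
      Summable (fun n : ℕ =>
        (|φ1 n| ^ 4 * (n : ℝ) ^ (2 * ηt) + |φ2 n| ^ 4) *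
          (n : ℝ) ^ (-(2 * s))) :=
  sparse_potential_summability_general γ hγ β₁ β₂ hβ₁₂ hβ₂ φ1 φ2 hbounds s hs
end
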